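/- arXiv:2506.07000 — 7 statements merged into one kernel-verified Lean document; each statement's English description precedes it below -/
import Mathlib

section
/- Let G be a finite simple graph with no isolated vertices and let e = ab be a non-pendant edge of G (i.e., both endpoints a and b have degree at least 2 in G). Then γ_t(G \ {e}) ≤ γ_t(G) + 2, where G \ {e} is the graph obtained from G by deleting the edge e. -/
open SimpleGraph

/-- A set `S` of vertices is a total dominating set of `G` if every vertex of `G`
is adjacent to at least one vertex of `S`. -/
def IsTotalDominatingSet {V : Type*} (G : SimpleGraph V) (S : Set V) : Prop :=
  ∀ v : V, ∃ u ∈ S, G.Adj v u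

/-- The total domination number of `G`: the minimum cardinality of a total
dominating set of `G`. -/
noncomputable def totalDominationNumber {V : Type*} (G : SimpleGraph V) : ℕ :=
  sInf {n : ℕ | ∃ S : Set V, S.ncard = n ∧ IsTotalDominatingSet G S}

/-- A graph has no isolated vertices if every vertex has a neighbor. -/
def NoIsolatedVerts {V : Type*} (G : SimpleGraph V) : Prop :=
  ∀ v : V, ∃ u : V, G.Adj v u

/-- The `k`-total bondage number of `G`: the minimum cardinality of a set `F` of
edges of `G` such that `G − F` has no isolated vertices and the total domination
number of `G − F` is at least `γ_t(G) + k`. -/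
noncomputable def kTotalBondage {V : Type*} (G : SimpleGraph V) (k : ℕ) : ℕ :=
  sInf {m : ℕ | ∃ F : Set (Sym2 V), F ⊆ G.edgeSet ∧ F.ncard = m ∧
    NoIsolatedVerts (G.deleteEdges F) ∧
    totalDominationNumber G + k ≤ totalDominationNumber (G.deleteEdges F)}

/-- Deleting a single non-pendant edge increases the total domination number by
at most `2`. -/
theorem totalDominationNumber_deleteEdge_le {V : Type*} [Fintype V]
    (G : SimpleGraph V) [DecidableRel G.Adj] (h : NoIsolatedVerts G)
    (a b : V) (hab : G.Adj a b) (ha : 2 ≤ G.degree a) (hb : 2 ≤ G.degree b) :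
    totalDominationNumber (G.deleteEdges {s(a, b)}) ≤ totalDominationNumber G + 2 := by
  classical
  have hmem : totalDominationNumber G ∈
      {n : ℕ | ∃ S : Set V, S.ncard = n ∧ IsTotalDominatingSet G S} := by
    apply Nat.sInf_mem
    exact ⟨(Set.univ : Set V).ncard, Set.univ, rfl, fun v => by
      obtain ⟨u, hu⟩ := h v; exact ⟨u, Set.mem_univ u, hu⟩⟩
  obtain ⟨S, hScard, hS⟩ := hmem
  -- a has a neighbor other than b
  obtain ⟨a', ha'mem, ha'⟩ := Finset.exists_mem_ne
    (by rw [card_neighborFinset_eq_degree]; omega : 1 < (G.neighborFinset a).card) b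
  obtain ⟨b', hb'mem, hb'⟩ := Finset.exists_mem_ne
    (by rw [card_neighborFinset_eq_degree]; omega : 1 < (G.neighborFinset b).card) a
  rw [mem_neighborFinset] at ha'mem hb'mem
  set S' : Set V := insert a' (insert b' S) with hS'def
  have hne : a ≠ b := G.ne_of_adj hab
  have hTDS : IsTotalDominatingSet (G.deleteEdges {s(a, b)}) S' := by
    intro v
    obtain ⟨u, hu, hadj⟩ := hS v
    by_cases hc : s(v, u) = s(a, b)
    · rw [Sym2.eq_iff] at hc
      rcases hc with ⟨rfl, rfl⟩ | ⟨rfl, rfl⟩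
      · refine ⟨a', Or.inl rfl, ?_⟩
        rw [deleteEdges_adj]
        refine ⟨ha'mem, ?_⟩
        intro heq
        rw [Set.mem_singleton_iff, Sym2.eq_iff] at heq
        rcases heq with ⟨h1, h2⟩ | ⟨h1, h2⟩
        · exact ha' h2
        · exact hne h1
      · refine ⟨b', Or.inr (Or.inl rfl), ?_⟩
        rw [deleteEdges_adj]
        refine ⟨hb'mem, ?_⟩
        intro heq
        rw [Set.mem_singleton_iff, Sym2.eq_iff] at heq
        rcases heq with ⟨h1, h2⟩ | ⟨h1, h2⟩
        · exact hne h1.symm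
        · exact hb' h2
    · refine ⟨u, Or.inr (Or.inr hu), ?_⟩
      rw [deleteEdges_adj]
      exact ⟨hadj, by simpa using hc⟩
  have hcard : S'.ncard ≤ totalDominationNumber G + 2 := by
    calc S'.ncard ≤ (insert b' S).ncard + 1 :=
          Set.ncard_insert_le _ _
      _ ≤ S.ncard + 1 + 1 := by
          have := Set.ncard_insert_le b' S
          omega
      _ = totalDominationNumber G + 2 := by omega
  calc totalDominationNumber (G.deleteEdges {s(a, b)}) ≤ S'.ncard :=
        Nat.sInf_le ⟨S', rfl, hTDS⟩
    _ ≤ totalDominationNumber G + 2 := hcard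
end

section
/- Let a and b be integers with a ≥ 2 and b ≥ 2. Then γ_t(P_a) + γ_t(P_b) ≤ γ_t(P_{a+b−2}) + 2, where P_n denotes the path graph on n vertices. -/
open SimpleGraph

lemma exists_min_tds (n : ℕ) (hn : 2 ≤ n) :
    ∃ S : Set (Fin n), S.ncard = totalDominationNumber (pathGraph n) ∧
      IsTotalDominatingSet (pathGraph n) S := by
  have hne : {k : ℕ | ∃ S : Set (Fin n), S.ncard = k ∧
      IsTotalDominatingSet (pathGraph n) S}.Nonempty := by
    refine ⟨(Set.univ : Set (Fin n)).ncard, Set.univ, rfl, fun v => ?_⟩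
    by_cases h : v.val + 1 < n
    · exact ⟨⟨v.val + 1, h⟩, trivial, by rw [pathGraph_adj]; left; rfl⟩
    · exact ⟨⟨v.val - 1, by omega⟩, trivial, by rw [pathGraph_adj]; right; simp; omega⟩
  obtain ⟨S, h1, h2⟩ := Nat.sInf_mem hne
  exact ⟨S, h1, h2⟩

lemma tds_le {n : ℕ} (S : Set (Fin n)) (h : IsTotalDominatingSet (pathGraph n) S) :
    totalDominationNumber (pathGraph n) ≤ S.ncard :=
  Nat.sInf_le ⟨S, rfl, h⟩

lemma ncard_aux {V : Type*} [Finite V] (S A B : Set V) (x y : V) (hxy : x ≠ y)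
    (hA : x ∈ A) (hB : y ∈ B) (hU : (S ∩ A) ∪ (S ∩ B) = S)
    (hI : (S ∩ A) ∩ (S ∩ B) = S ∩ {x, y}) :
    ((S ∩ A) ∪ {x}).ncard + ((S ∩ B) ∪ {y}).ncard ≤ S.ncard + 2 := by
  have hkey : (S ∩ A).ncard + (S ∩ B).ncard = S.ncard + (S ∩ {x, y}).ncard := by
    rw [← Set.ncard_union_add_ncard_inter _ _ (Set.toFinite _) (Set.toFinite _), hU, hI]
  by_cases hxS : x ∈ S <;> by_cases hyS : y ∈ S
  · have e1 : (S ∩ A) ∪ {x} = S ∩ A := by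
      rw [Set.union_eq_self_of_subset_right]; simp [hxS, hA]
    have e2 : (S ∩ B) ∪ {y} = S ∩ B := by
      rw [Set.union_eq_self_of_subset_right]; simp [hyS, hB]
    have e3 : (S ∩ {x, y}).ncard = 2 := by
      have h : S ∩ {x, y} = {x, y} := by
        rw [Set.inter_eq_self_of_subset_right]; intro u hu
        rcases hu with h | h
        · exact h ▸ hxS
        · exact h ▸ hyS
      rw [h, Set.ncard_pair hxy]
    rw [e1, e2]; omega
  · have e1 : (S ∩ A) ∪ {x} = S ∩ A := by
      rw [Set.union_eq_self_of_subset_right]; simp [hxS, hA]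
    have e2 : ((S ∩ B) ∪ {y}).ncard ≤ (S ∩ B).ncard + 1 := by
      rw [Set.union_singleton]
      exact Set.ncard_insert_le _ _
    have e3 : (S ∩ {x, y}).ncard ≤ 1 := by
      have hsub : S ∩ {x, y} ⊆ {x} := by
        rintro u ⟨huS, hu | hu⟩
        · exact hu
        · exact absurd (hu ▸ huS) hyS
      calc (S ∩ {x, y}).ncard ≤ ({x} : Set V).ncard :=
            Set.ncard_le_ncard hsub (Set.toFinite _)
        _ = 1 := Set.ncard_singleton x
    rw [e1]; omega
  · have e1 : ((S ∩ A) ∪ {x}).ncard ≤ (S ∩ A).ncard + 1 := by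
      rw [Set.union_singleton]; exact Set.ncard_insert_le _ _
    have e2 : (S ∩ B) ∪ {y} = S ∩ B := by
      rw [Set.union_eq_self_of_subset_right]; simp [hyS, hB]
    have e3 : (S ∩ {x, y}).ncard ≤ 1 := by
      have hsub : S ∩ {x, y} ⊆ {y} := by
        rintro u ⟨huS, hu | hu⟩
        · exact absurd (hu ▸ huS) hxS
        · exact hu
      calc (S ∩ {x, y}).ncard ≤ ({y} : Set V).ncard :=
            Set.ncard_le_ncard hsub (Set.toFinite _)
        _ = 1 := Set.ncard_singleton y
    rw [e2]; omega
  · have e1 : ((S ∩ A) ∪ {x}).ncard ≤ (S ∩ A).ncard + 1 := by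
      rw [Set.union_singleton]; exact Set.ncard_insert_le _ _
    have e2 : ((S ∩ B) ∪ {y}).ncard ≤ (S ∩ B).ncard + 1 := by
      rw [Set.union_singleton]; exact Set.ncard_insert_le _ _
    have e3 : (S ∩ {x, y}).ncard = 0 := by
      have hsub : S ∩ {x, y} = ∅ := by
        ext u
        simp only [Set.mem_inter_iff, Set.mem_insert_iff, Set.mem_singleton_iff,
          Set.mem_empty_iff_false, iff_false, not_and]
        rintro huS (rfl | rfl)
        · exact hxS huS
        · exact hyS huS
      rw [hsub, Set.ncard_empty]
    omega

/-- For paths `P_a` and `P_b` with `a, b ≥ 2`,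
`γ_t(P_a) + γ_t(P_b) ≤ γ_t(P_{a+b−2}) + 2`. -/
theorem totalDominationNumber_path_add_le (a b : ℕ) (ha : 2 ≤ a) (hb : 2 ≤ b) :
    totalDominationNumber (pathGraph a) + totalDominationNumber (pathGraph b) ≤
      totalDominationNumber (pathGraph (a + b - 2)) + 2 := by
  obtain ⟨S, hScard, hSdom⟩ := exists_min_tds (a + b - 2) (by omega)
  obtain ⟨p, hp⟩ : ∃ p : Fin a → Fin (a + b - 2), ∀ i, (p i).val = i.val :=
    ⟨fun i => ⟨i.val, by omega⟩, fun i => rfl⟩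
  obtain ⟨q, hq⟩ : ∃ q : Fin b → Fin (a + b - 2), ∀ i, (q i).val = a - 2 + i.val :=
    ⟨fun i => ⟨a - 2 + i.val, by omega⟩, fun i => rfl⟩
  obtain ⟨x, hxv⟩ : ∃ x : Fin (a + b - 2), x.val = a - 2 := ⟨⟨a - 2, by omega⟩, rfl⟩
  obtain ⟨y, hyv⟩ : ∃ y : Fin (a + b - 2), y.val = a - 1 := ⟨⟨a - 1, by omega⟩, rfl⟩
  obtain ⟨xa, hxa⟩ : ∃ v : Fin a, v.val = a - 2 := ⟨⟨a - 2, by omega⟩, rfl⟩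
  obtain ⟨xb, hxb⟩ : ∃ v : Fin b, v.val = 1 := ⟨⟨1, by omega⟩, rfl⟩
  have hpinj : Function.Injective p := fun i j hij => by
    have := congrArg Fin.val hij; rw [hp, hp] at this; exact Fin.ext this
  have hqinj : Function.Injective q := fun i j hij => by
    have := congrArg Fin.val hij; rw [hq, hq] at this; exact Fin.ext (by omega)
  -- the two candidate sets
  have hd1 : IsTotalDominatingSet (pathGraph a) (p ⁻¹' S ∪ {xa}) := by
    intro v
    by_cases hv : v.val = a - 1
    · refine ⟨xa, Or.inr rfl, ?_⟩
      rw [pathGraph_adj]; right; omega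
    · obtain ⟨u, huS, hadj⟩ := hSdom (p v)
      rw [pathGraph_adj, hp] at hadj
      have hu : u.val < a := by omega
      refine ⟨⟨u.val, hu⟩, Or.inl ?_, ?_⟩
      · show p ⟨u.val, hu⟩ ∈ S
        have h : p ⟨u.val, hu⟩ = u := Fin.ext (by rw [hp])
        rwa [h]
      · rw [pathGraph_adj]; simp; omega
  have hd2 : IsTotalDominatingSet (pathGraph b) (q ⁻¹' S ∪ {xb}) := by
    intro w
    by_cases hw : w.val = 0
    · refine ⟨xb, Or.inr rfl, ?_⟩
      rw [pathGraph_adj]; left; omega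
    · obtain ⟨u, huS, hadj⟩ := hSdom (q w)
      rw [pathGraph_adj, hq] at hadj
      have hu2 : u.val - (a - 2) < b := by omega
      refine ⟨⟨u.val - (a - 2), hu2⟩, Or.inl ?_, ?_⟩
      · show q ⟨u.val - (a - 2), hu2⟩ ∈ S
        have h : q ⟨u.val - (a - 2), hu2⟩ = u := Fin.ext (by
          rw [hq]; show a - 2 + (u.val - (a - 2)) = u.val; omega)
        rwa [h]
      · rw [pathGraph_adj]; simp; omega
  -- cardinalities
  have himg1 : p '' (p ⁻¹' S ∪ {xa}) = (S ∩ Set.range p) ∪ {x} := by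
    rw [Set.image_union, Set.image_preimage_eq_inter_range]
    congr 1
    have : p xa = x := Fin.ext (by rw [hp, hxa, hxv])
    simp [this]
  have himg2 : q '' (q ⁻¹' S ∪ {xb}) = (S ∩ Set.range q) ∪ {y} := by
    rw [Set.image_union, Set.image_preimage_eq_inter_range]
    congr 1
    have : q xb = y := Fin.ext (by rw [hq, hxb, hyv]; omega)
    simp [this]
  have hc1 : (p ⁻¹' S ∪ {xa}).ncard = ((S ∩ Set.range p) ∪ {x}).ncard := by
    rw [← himg1, Set.ncard_image_of_injective _ hpinj]
  have hc2 : (q ⁻¹' S ∪ {xb}).ncard = ((S ∩ Set.range q) ∪ {y}).ncard := by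
    rw [← himg2, Set.ncard_image_of_injective _ hqinj]
  have hrp : Set.range p = {u : Fin (a + b - 2) | u.val < a} := by
    ext u
    constructor
    · rintro ⟨i, rfl⟩; have := hp i; simp only [Set.mem_setOf_eq]; omega
    · intro h
      simp only [Set.mem_setOf_eq] at h
      exact ⟨⟨u.val, h⟩, Fin.ext (by rw [hp])⟩
  have hrq : Set.range q = {u : Fin (a + b - 2) | a - 2 ≤ u.val} := by
    ext u
    constructor
    · rintro ⟨i, rfl⟩; have := hq i; simp only [Set.mem_setOf_eq]; omega
    · intro h
      simp only [Set.mem_setOf_eq] at h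
      have hlt : u.val - (a - 2) < b := by omega
      refine ⟨⟨u.val - (a - 2), hlt⟩, Fin.ext ?_⟩
      rw [hq]
      show a - 2 + (u.val - (a - 2)) = u.val
      omega
  have hxy : x ≠ y := fun h => by rw [Fin.ext_iff, hxv, hyv] at h; omega
  have hxp : x ∈ Set.range p := by rw [hrp]; simp only [Set.mem_setOf_eq]; omega
  have hyq : y ∈ Set.range q := by rw [hrq]; simp only [Set.mem_setOf_eq]; omega
  have hU : (S ∩ Set.range p) ∪ (S ∩ Set.range q) = S := by
    rw [← Set.inter_union_distrib_left, hrp, hrq]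
    have h : ({u : Fin (a + b - 2) | u.val < a} ∪ {u : Fin (a + b - 2) | a - 2 ≤ u.val})
        = Set.univ := by
      ext u; simp only [Set.mem_union, Set.mem_setOf_eq, Set.mem_univ, iff_true]; omega
    rw [h, Set.inter_univ]
  have hI : (S ∩ Set.range p) ∩ (S ∩ Set.range q) = S ∩ {x, y} := by
    rw [hrp, hrq]
    ext u
    simp only [Set.mem_inter_iff, Set.mem_setOf_eq, Set.mem_insert_iff,
      Set.mem_singleton_iff, Fin.ext_iff, hxv, hyv]
    constructor
    · rintro ⟨⟨h1, h2⟩, ⟨-, h4⟩⟩; exact ⟨h1, by omega⟩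
    · rintro ⟨h1, h2 | h2⟩ <;> exact ⟨⟨h1, by omega⟩, h1, by omega⟩
  have hbound := ncard_aux S (Set.range p) (Set.range q) x y hxy hxp hyq hU hI
  calc totalDominationNumber (pathGraph a) + totalDominationNumber (pathGraph b)
      ≤ (p ⁻¹' S ∪ {xa}).ncard + (q ⁻¹' S ∪ {xb}).ncard :=
        Nat.add_le_add (tds_le _ hd1) (tds_le _ hd2)
    _ ≤ S.ncard + 2 := by rw [hc1, hc2]; exact hbound
    _ = totalDominationNumber (pathGraph (a + b - 2)) + 2 := by rw [hScard]
end

section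
/- Let b ≥ 0 and let a_1, …, a_{b+1} be integers each at least 2, with n = Σ_{i=1}^{b+1} a_i. Then Σ_{i=1}^{b+1} γ_t(P_{a_i}) ≤ γ_t(P_{n−2b}) + 2b, where P_m denotes the path graph on m vertices. -/
open SimpleGraph

/-!
Cutting a path `P_{a+c-2}` into two subpaths `P_a` and `P_c` that overlap in the two vertices
`a-2, a-1`, a minimum total dominating set `S` of the long path restricts to total dominating sets
of both pieces once `a-2` is added to the left piece and `a-1` to the right one: every other vertex
of a piece has all its neighbours inside that piece. Counting the overlap gives
`γ_t(P_a) + γ_t(P_c) ≤ |S| + 2`, and the theorem follows by gluing the paths one at a time.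
-/

open Set

section TotalDomination

variable {V W : Type*} {G : SimpleGraph V} {H : SimpleGraph W}

lemma IsTotalDominatingSet.mono {S T : Set V} (hS : IsTotalDominatingSet G S) (hST : S ⊆ T) :
    IsTotalDominatingSet G T := fun v =>
  let ⟨u, hu, hvu⟩ := hS v
  ⟨u, hST hu, hvu⟩

lemma NoIsolatedVerts.isTotalDominatingSet_univ (hG : NoIsolatedVerts G) :
    IsTotalDominatingSet G univ := fun v =>
  let ⟨u, hvu⟩ := hG v
  ⟨u, mem_univ u, hvu⟩

lemma totalDominationNumber_le_ncard {S : Set V} (hS : IsTotalDominatingSet G S) :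
    totalDominationNumber G ≤ S.ncard :=
  Nat.sInf_le ⟨S, rfl, hS⟩

lemma NoIsolatedVerts.exists_isTotalDominatingSet_ncard_eq (hG : NoIsolatedVerts G) :
    ∃ S, IsTotalDominatingSet G S ∧ S.ncard = totalDominationNumber G := by
  obtain ⟨S, hcard, hS⟩ : totalDominationNumber G ∈
      {n : ℕ | ∃ S : Set V, S.ncard = n ∧ IsTotalDominatingSet G S} :=
    Nat.sInf_mem ⟨_, univ, rfl, hG.isTotalDominatingSet_univ⟩
  exact ⟨S, hS, hcard⟩

lemma IsTotalDominatingSet.preimage (f : G ↪g H) {S : Set W} (hS : IsTotalDominatingSet H S)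
    (hf : ∀ v, (∀ w, H.Adj (f v) w → w ∈ range f) ∨ ∃ u, f u ∈ S ∧ G.Adj v u) :
    IsTotalDominatingSet G (f ⁻¹' S) := by
  intro v
  rcases hf v with hclosed | hdominated
  · obtain ⟨w, hwS, hvw⟩ := hS (f v)
    obtain ⟨u, rfl⟩ := hclosed w hvw
    exact ⟨u, hwS, f.map_adj_iff.1 hvw⟩
  · exact hdominated

end TotalDomination

namespace Set

lemma ncard_preimage_insert_le {V W : Type*} {f : V → W} (hf : f.Injective) {S : Set W}
    (hS : S.Finite) (r : W) : (f ⁻¹' insert r S).ncard ≤ ((S \ {r}) ∩ range f).ncard + 1 := by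
  rw [← ncard_image_of_injective _ hf, image_preimage_eq_inter_range]
  calc (insert r S ∩ range f).ncard ≤ (insert r ((S \ {r}) ∩ range f)).ncard :=
        ncard_le_ncard (fun x hx => by by_cases x = r <;> simp_all)
          ((hS.sdiff.inter_of_left _).insert r)
    _ ≤ _ := ncard_insert_le _ _

lemma ncard_preimage_insert_add_ncard_preimage_insert_le {V₁ V₂ W : Type*} {f₁ : V₁ → W}
    {f₂ : V₂ → W} (hf₁ : f₁.Injective) (hf₂ : f₂.Injective) {S : Set W} (hS : S.Finite)
    {p q : W} (hpq : range f₁ ∩ range f₂ ⊆ {p, q}) :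
    (f₁ ⁻¹' insert p S).ncard + (f₂ ⁻¹' insert q S).ncard ≤ S.ncard + 2 := by
  have hdisjoint : Disjoint ((S \ {p}) ∩ range f₁) ((S \ {q}) ∩ range f₂) := by
    refine disjoint_left.2 fun x ⟨⟨_, hxp⟩, hx₁⟩ ⟨⟨_, hxq⟩, hx₂⟩ => ?_
    rcases hpq ⟨hx₁, hx₂⟩ with rfl | rfl
    exacts [hxp rfl, hxq rfl]
  have hsplit : ((S \ {p}) ∩ range f₁).ncard + ((S \ {q}) ∩ range f₂).ncard ≤ S.ncard := by
    rw [← ncard_union_eq hdisjoint (hS.sdiff.inter_of_left _) (hS.sdiff.inter_of_left _)]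
    exact ncard_le_ncard (union_subset (fun x hx => hx.1.1) (fun x hx => hx.1.1)) hS
  have := ncard_preimage_insert_le hf₁ hS p
  have := ncard_preimage_insert_le hf₂ hS q
  omega

end Set

namespace SimpleGraph

lemma noIsolatedVerts_pathGraph {m : ℕ} (hm : 2 ≤ m) : NoIsolatedVerts (pathGraph m) := by
  intro v
  by_cases hv : v.val + 1 < m
  · exact ⟨⟨v + 1, hv⟩, pathGraph_adj.2 (Or.inl rfl)⟩
  · exact ⟨⟨v - 1, by omega⟩, pathGraph_adj.2 (Or.inr (by simp only; omega))⟩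

def pathGraph.segmentEmbedding {m N : ℕ} (k : ℕ) (h : k + m ≤ N) : pathGraph m ↪g pathGraph N where
  toFun v := ⟨k + v, by omega⟩
  inj' u v huv := Fin.ext (by simpa using huv)
  map_rel_iff' {u v} := by
    show (pathGraph N).Adj ⟨k + u, _⟩ ⟨k + v, _⟩ ↔ _
    simp only [pathGraph_adj]; omega

@[simp]
lemma pathGraph.val_segmentEmbedding {m N k : ℕ} (h : k + m ≤ N) (v : Fin m) :
    (segmentEmbedding k h v).val = k + v := rfl

lemma pathGraph.mem_range_segmentEmbedding {m N k : ℕ} (h : k + m ≤ N) {w : Fin N} :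
    w ∈ range (segmentEmbedding k h) ↔ k ≤ w ∧ w < k + m :=
  ⟨by rintro ⟨v, rfl⟩; have := v.isLt; simp only [val_segmentEmbedding]; omega,
    fun hw => ⟨⟨w - k, by omega⟩, Fin.ext (by simp; omega)⟩⟩

lemma pathGraph.adj_segmentEmbedding_mem_range {m N k : ℕ} (h : k + m ≤ N) {v : Fin m}
    (hleft : k = 0 ∨ 0 < v.val) (hright : k + m = N ∨ v.val + 1 < m) {w : Fin N}
    (hw : (pathGraph N).Adj (segmentEmbedding k h v) w) : w ∈ range (segmentEmbedding k h) := by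
  rw [pathGraph_adj, val_segmentEmbedding] at hw
  rw [mem_range_segmentEmbedding]
  omega

theorem totalDominationNumber_pathGraph_add_le {a c : ℕ} (ha : 2 ≤ a) (hc : 2 ≤ c) :
    totalDominationNumber (pathGraph a) + totalDominationNumber (pathGraph c) ≤
      totalDominationNumber (pathGraph (a + c - 2)) + 2 := by
  obtain ⟨S, hS, hcard⟩ :=
    (noIsolatedVerts_pathGraph (m := a + c - 2) (by omega)).exists_isTotalDominatingSet_ncard_eq
  let f₁ := pathGraph.segmentEmbedding (m := a) (N := a + c - 2) 0 (by omega)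
  let f₂ := pathGraph.segmentEmbedding (m := c) (N := a + c - 2) (a - 2) (by omega)
  let p : Fin (a + c - 2) := ⟨a - 2, by omega⟩
  let q : Fin (a + c - 2) := ⟨a - 1, by omega⟩
  have hS₁ : IsTotalDominatingSet (pathGraph a) (f₁ ⁻¹' insert p S) := by
    refine (hS.mono (subset_insert _ _)).preimage f₁ fun v => ?_
    by_cases hv : v.val + 1 < a
    · exact .inl fun w => pathGraph.adj_segmentEmbedding_mem_range _ (.inl rfl) (.inr hv)
    · exact .inr ⟨⟨a - 2, by omega⟩, .inl (Fin.ext (by simp [f₁, p])),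
        pathGraph_adj.2 (.inr (by simp only; omega))⟩
  have hS₂ : IsTotalDominatingSet (pathGraph c) (f₂ ⁻¹' insert q S) := by
    refine (hS.mono (subset_insert _ _)).preimage f₂ fun v => ?_
    by_cases hv : 0 < v.val
    · exact .inl fun w => pathGraph.adj_segmentEmbedding_mem_range _ (.inr hv) (.inl (by omega))
    · exact .inr ⟨⟨1, by omega⟩, .inl (Fin.ext (by simp [f₂, q]; omega)),
        pathGraph_adj.2 (.inl (by simp only; omega))⟩
  have hoverlap : range f₁ ∩ range f₂ ⊆ {p, q} := by
    rintro w ⟨hw₁, hw₂⟩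
    rw [pathGraph.mem_range_segmentEmbedding] at hw₁ hw₂
    simp only [mem_insert_iff, mem_singleton_iff, Fin.ext_iff, p, q]
    omega
  calc _ ≤ (f₁ ⁻¹' insert p S).ncard + (f₂ ⁻¹' insert q S).ncard :=
        add_le_add (totalDominationNumber_le_ncard hS₁) (totalDominationNumber_le_ncard hS₂)
    _ ≤ S.ncard + 2 := ncard_preimage_insert_add_ncard_preimage_insert_le f₁.injective
        f₂.injective S.toFinite hoverlap
    _ = _ := by rw [hcard]

end SimpleGraph

/-- If `n = a_1 + ⋯ + a_{b+1}` with each `a_i ≥ 2`, then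
`Σ_i γ_t(P_{a_i}) ≤ γ_t(P_{n−2b}) + 2b`. -/
theorem totalDominationNumber_paths_sum_le (b : ℕ) (a : Fin (b + 1) → ℕ)
    (ha : ∀ i, 2 ≤ a i) (n : ℕ) (hn : n = ∑ i, a i) :
    ∑ i, totalDominationNumber (pathGraph (a i)) ≤
      totalDominationNumber (pathGraph (n - 2 * b)) + 2 * b := by
  subst hn
  induction b with
  | zero => rw [Fin.sum_univ_one, Fin.sum_univ_one]; simp
  | succ b ih =>
    have hinit := ih (fun i => a i.castSucc) (fun i => ha _)
    set s := ∑ i : Fin (b + 1), a i.castSucc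
    have hs : 2 * (b + 1) ≤ s := by
      simpa [mul_comm] using
        Finset.card_nsmul_le_sum Finset.univ (fun i : Fin (b + 1) => a i.castSucc) 2 fun i _ => ha _
    have hlast := ha (Fin.last (b + 1))
    have hglue := totalDominationNumber_pathGraph_add_le (a := s - 2 * b) (by omega) hlast
    rw [Fin.sum_univ_castSucc, Fin.sum_univ_castSucc a,
      show s + a (Fin.last (b + 1)) - 2 * (b + 1) = s - 2 * b + a (Fin.last (b + 1)) - 2 by omega]
    omega
end

section
/- Let n ≥ 5 be an integer. Then the 1-total bondage number of the complete graph K_n equals 2n − 5: b_t^1(K_n) = 2n − 5. -/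
open SimpleGraph

/-!
Write `K_n − F = Dᶜ`, where `D` is the graph formed by the deleted edges. Then `K_n − F` has no
isolated vertex iff every vertex of `D` misses some other vertex, and, as `γ_t(K_n) = 2`,
`γ_t(K_n − F) ≥ 3` iff no edge `xy` of `Dᶜ` totally dominates, i.e. iff any two distinct
nonadjacent vertices of `D` have a common neighbour. So `b_t^1(K_n)` is the least number of edges
of a graph of diameter at most two on `n` vertices with maximum degree at most `n − 2`.

Blowing up one vertex of the 5-cycle into `n − 4` independent copies gives such a graph with
`2n − 5` edges. Conversely, let `v` have minimum degree, which is at least two. If it is at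
least four, the degree sum is at least `4n`. If `deg v = 3`, every vertex outside `N[v]` has a
neighbour in `N(v)`, so the degrees over `N(v)` add up to at least `n − 1` and the degree sum is at
least `4n − 10`. If `N(v) = {a, b}`, count for every vertex its neighbours of smaller potential,
which counts each edge at most once: `v` has none, `a` and `b` have `v`, every other vertex has `a`
or `b`, and all of them but one have a second such neighbour: the other of `a` and `b`, or else a
neighbour in `D − {v, a, b}` that is closer to a fixed base vertex (if some vertices see only `a`
and some only `b`, all of these lie in one component of `D − {v, a, b}`) or that sees `b` (if no
vertex sees only `b`; then `ab` is not an edge, since `a` misses some vertex).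
-/

namespace SimpleGraph

variable {V : Type*}

def DiamLeTwo (G : SimpleGraph V) : Prop :=
  ∀ x y, x ≠ y → ¬G.Adj x y → ∃ z, G.Adj z x ∧ G.Adj z y

theorem Reachable.exists_adj_dist_lt {G : SimpleGraph V} {u v : V} (h : G.Reachable u v)
    (hne : u ≠ v) : ∃ w, G.Adj v w ∧ G.dist u w < G.dist u v := by
  obtain ⟨p, hp⟩ := h.symm.exists_walk_length_eq_dist
  cases p with
  | nil => exact absurd rfl hne
  | cons hadj q =>
    refine ⟨_, hadj, ?_⟩
    have := G.dist_le q
    rw [Walk.length_cons] at hp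
    rw [dist_comm, dist_comm (u := u)]
    omega

theorem DiamLeTwo.comap {W : Type*} {H : SimpleGraph W} {f : V → W} (hH : H.DiamLeTwo)
    (hH' : NoIsolatedVerts H) (hf : Function.Surjective f) : (H.comap f).DiamLeTwo := by
  intro x y hxy hadj
  rw [comap_adj] at hadj
  by_cases hfxy : f x = f y
  · obtain ⟨w, hw⟩ := hH' (f x)
    obtain ⟨z, rfl⟩ := hf w
    exact ⟨z, hw.symm, by simpa [hfxy] using hw.symm⟩
  · obtain ⟨w, hwx, hwy⟩ := hH _ _ hfxy hadj
    obtain ⟨z, rfl⟩ := hf w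
    exact ⟨z, hwx, hwy⟩

theorem noIsolatedVerts_compl_comap {W : Type*} {H : SimpleGraph W} {f : V → W}
    (hH : NoIsolatedVerts Hᶜ) (hf : Function.Surjective f) : NoIsolatedVerts (H.comap f)ᶜ := by
  intro x
  obtain ⟨w, hxw, hadj⟩ := hH (f x)
  obtain ⟨y, rfl⟩ := hf w
  exact ⟨y, fun h ↦ hxw (congrArg f h), hadj⟩

open Finset

theorem sum_card_filter_lt_le_card_edgeFinset [Fintype V] [DecidableEq V] (G : SimpleGraph V)
    [DecidableRel G.Adj] (φ : V → ℕ) :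
    ∑ x, #{y ∈ G.neighborFinset x | φ y < φ x} ≤ #G.edgeFinset := by
  rw [← card_sigma]
  refine card_le_card_of_injOn (fun p ↦ s(p.1, p.2)) (fun p hp ↦ ?_) (fun p hp q hq hpq ↦ ?_)
  · simp only [coe_sigma, Set.mem_sigma_iff, coe_univ, Set.mem_univ, coe_filter,
      mem_neighborFinset, Set.mem_ofPred_eq, true_and] at hp
    simpa using hp.1
  · simp only [coe_sigma, Set.mem_sigma_iff, coe_univ, Set.mem_univ, coe_filter,
      mem_neighborFinset, Set.mem_ofPred_eq, true_and] at hp hq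
    rcases Sym2.eq_iff.1 hpq with ⟨h1, h2⟩ | ⟨h1, h2⟩
    · exact Sigma.ext h1 (heq_of_eq h2)
    · rw [h1, h2] at hp
      omega

end SimpleGraph

section TotalDomination

variable {V : Type*}

theorem totalDominationNumber_top [Finite V] [Nontrivial V] :
    totalDominationNumber (⊤ : SimpleGraph V) = 2 := by
  obtain ⟨x, y, hxy⟩ := exists_pair_ne V
  have hdom : IsTotalDominatingSet (⊤ : SimpleGraph V) {x, y} := fun v ↦ by
    by_cases hv : v = x
    · exact ⟨y, by simp, by simp [hv, hxy]⟩
    · exact ⟨x, by simp, by simpa using hv⟩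
  refine le_antisymm (Nat.sInf_le ⟨{x, y}, Set.ncard_pair hxy, hdom⟩) ?_
  refine le_csInf ⟨2, {x, y}, Set.ncard_pair hxy, hdom⟩ ?_
  rintro _ ⟨S, rfl, hS⟩
  obtain ⟨u, huS, -⟩ := hS x
  obtain ⟨w, hwS, huw⟩ := hS u
  exact (Set.one_lt_ncard_iff S.toFinite).2 ⟨u, w, huS, hwS, huw.ne⟩

theorem three_le_totalDominationNumber_iff [Finite V] [Nonempty V] {G : SimpleGraph V}
    (hG : NoIsolatedVerts G) :
    3 ≤ totalDominationNumber G ↔ ∀ x y, G.Adj x y → ∃ w, ¬G.Adj w x ∧ ¬G.Adj w y := by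
  constructor
  · intro h x y hxy
    by_contra! hcov
    have hdom : IsTotalDominatingSet G {x, y} := fun w ↦ by
      by_cases hwx : G.Adj w x
      · exact ⟨x, by simp, hwx⟩
      · exact ⟨y, by simp, hcov w hwx⟩
    have : totalDominationNumber G ≤ ({x, y} : Set V).ncard := Nat.sInf_le ⟨_, rfl, hdom⟩
    rw [Set.ncard_pair hxy.ne] at this
    omega
  · intro h
    refine le_csInf ⟨_, Set.univ, rfl, fun v ↦ ?_⟩ ?_
    · obtain ⟨u, hu⟩ := hG v
      exact ⟨u, trivial, hu⟩
    rintro _ ⟨S, rfl, hS⟩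
    by_contra! hS2
    obtain ⟨x, hxS, -⟩ := hS (Classical.arbitrary V)
    obtain ⟨y, hyS, hxy⟩ := hS x
    have hSxy : {x, y} = S := Set.eq_of_subset_of_ncard_le (by grind)
      (by rw [Set.ncard_pair hxy.ne]; omega)
    obtain ⟨w, hwx, hwy⟩ := h x y hxy
    obtain ⟨u, huS, hwu⟩ := hS w
    rw [← hSxy] at huS
    rcases huS with rfl | rfl <;> contradiction

theorem three_le_totalDominationNumber_compl_iff [Finite V] [Nonempty V] {D : SimpleGraph V}
    (hD : NoIsolatedVerts Dᶜ) : 3 ≤ totalDominationNumber Dᶜ ↔ D.DiamLeTwo := by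
  rw [three_le_totalDominationNumber_iff hD]
  simp only [compl_adj, not_and, not_not]
  refine forall₂_congr fun x y ↦ ⟨fun h hxy hadj ↦ ?_, fun h ⟨hxy, hadj⟩ ↦ ?_⟩
  · obtain ⟨w, hwx, hwy⟩ := h ⟨hxy, hadj⟩
    by_cases hw : w = x
    · subst hw; exact absurd (hwy hxy) hadj
    by_cases hw' : w = y
    · subst hw'; exact absurd (hwx hw).symm hadj
    exact ⟨w, hwx hw, hwy hw'⟩
  · obtain ⟨z, hzx, hzy⟩ := h hxy hadj
    exact ⟨z, fun _ ↦ hzx, fun _ ↦ hzy⟩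

theorem kTotalBondage_top_one [Finite V] [Nontrivial V] :
    kTotalBondage (⊤ : SimpleGraph V) 1 =
      sInf {m | ∃ D : SimpleGraph V, D.edgeSet.ncard = m ∧ NoIsolatedVerts Dᶜ ∧ D.DiamLeTwo} := by
  unfold kTotalBondage
  congr 1
  ext m
  rw [totalDominationNumber_top]
  constructor
  · rintro ⟨F, hF, rfl, hiso, hγ⟩
    obtain ⟨D, rfl⟩ : ∃ D : SimpleGraph V, D.edgeSet = F :=
      ⟨fromEdgeSet F, by
        rwa [edgeSet_fromEdgeSet, sdiff_eq_left, ← Set.subset_compl_iff_disjoint_right,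
          ← edgeSet_top]⟩
    rw [deleteEdges_edgeSet, top_sdiff] at hiso hγ
    exact ⟨D, rfl, hiso, (three_le_totalDominationNumber_compl_iff hiso).1 hγ⟩
  · rintro ⟨D, rfl, hiso, hD⟩
    refine ⟨D.edgeSet, edgeSet_mono le_top, rfl, ?_⟩
    rw [deleteEdges_edgeSet, top_sdiff]
    exact ⟨hiso, (three_le_totalDominationNumber_compl_iff hiso).2 hD⟩

end TotalDomination

namespace SimpleGraph.DiamLeTwo

open Finset

variable {V : Type*} {D : SimpleGraph V}

section Degree

variable [Fintype V] [DecidableRel D.Adj]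

theorem two_le_degree (hD : D.DiamLeTwo) (hΔ : NoIsolatedVerts Dᶜ) (v : V) :
    2 ≤ D.degree v := by
  obtain ⟨x, hvx, hadj⟩ : ∃ x, v ≠ x ∧ ¬D.Adj v x := by simpa using hΔ v
  obtain ⟨u, huv, -⟩ := hD v x hvx hadj
  by_contra! h
  have hN : ∀ z, D.Adj v z → z = u := fun z hz ↦
    card_le_one.1 (Nat.le_of_lt_succ h) z (by simpa using hz) u (by simpa using huv.symm)
  obtain ⟨y, huy, hadj'⟩ : ∃ y, u ≠ y ∧ ¬D.Adj u y := by simpa using hΔ u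
  refine hadj' ?_
  by_cases hyv : y = v
  · exact hyv ▸ huv
  obtain ⟨z, hzy, hzv⟩ := hD y v hyv fun h ↦ huy (hN y h.symm).symm
  exact hN z hzv.symm ▸ hzy

variable [DecidableEq V]

theorem card_sub_one_le_sum_degree (hD : D.DiamLeTwo) (v : V) :
    Fintype.card V - 1 ≤ ∑ u ∈ D.neighborFinset v, D.degree u := by
  set N := D.neighborFinset v
  have hvN : v ∉ N := by simp [N]
  have hcover : (insert v N)ᶜ ⊆ N.biUnion fun u ↦ (D.neighborFinset u).erase v := fun x hx ↦ by
    simp only [mem_compl, mem_insert, not_or, N, mem_neighborFinset] at hx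
    obtain ⟨z, hzx, hzv⟩ := hD x v hx.1 fun h ↦ hx.2 h.symm
    simp only [mem_biUnion, mem_erase, mem_neighborFinset, N]
    exact ⟨z, hzv.symm, hx.1, hzx⟩
  have hsum : ∑ u ∈ N, D.degree u = ∑ u ∈ N, #((D.neighborFinset u).erase v) + #N := by
    rw [card_eq_sum_ones, ← sum_add_distrib]
    refine sum_congr rfl fun u hu ↦ ?_
    rw [card_erase_add_one (by simpa [N] using (mem_neighborFinset _ _ _).1 hu |>.symm)]
    rfl
  have := (card_le_card hcover).trans card_biUnion_le
  rw [card_compl, card_insert_of_notMem hvN] at this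
  omega

theorem two_mul_card_sub_five_le_of_three_le_degree (hD : D.DiamLeTwo)
    (h3 : ∀ v, 3 ≤ D.degree v) : 2 * Fintype.card V - 5 ≤ #D.edgeFinset := by
  have hsum := D.sum_degrees_eq_twice_card_edges
  by_cases hv : ∃ v, D.degree v = 3
  · obtain ⟨v, hv⟩ := hv
    have hN := hD.card_sub_one_le_sum_degree v
    have hNc := card_nsmul_le_sum (D.neighborFinset v)ᶜ (fun x ↦ D.degree x) 3 fun x _ ↦ h3 x
    rw [smul_eq_mul, card_compl, D.card_neighborFinset_eq_degree, hv] at hNc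
    rw [← sum_add_sum_compl (D.neighborFinset v)] at hsum
    omega
  · have h4 := card_nsmul_le_sum univ (fun x ↦ D.degree x) 4 fun x _ ↦
      lt_of_le_of_ne (h3 x) fun h ↦ hv ⟨x, h.symm⟩
    rw [smul_eq_mul, card_univ] at h4
    omega

end Degree

section NeighbourPair

variable [DecidableEq V] {v a b : V}

theorem adj_or_adj_of_notMem (hD : D.DiamLeTwo) (hv : ∀ z, D.Adj v z ↔ z = a ∨ z = b)
    {x : V} (hx : x ∉ ({v, a, b} : Finset V)) : D.Adj a x ∨ D.Adj b x := by
  simp only [mem_insert, mem_singleton, not_or] at hx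
  obtain ⟨z, hzx, hzv⟩ := hD x v hx.1 fun h ↦ by have := (hv x).1 h.symm; tauto
  rcases (hv z).1 hzv.symm with rfl | rfl <;> simp [hzx]

theorem reachable_of_not_adj_of_not_adj (hD : D.DiamLeTwo)
    (hv : ∀ z, D.Adj v z ↔ z = a ∨ z = b) {x y : V} (hx : x ∉ ({v, a, b} : Finset V))
    (hy : y ∉ ({v, a, b} : Finset V)) (hbx : ¬D.Adj b x) (hay : ¬D.Adj a y) (hby : D.Adj b y) :
    ((⊤ : D.Subgraph).deleteVerts ({v, a, b} : Finset V)).spanningCoe.Reachable x y := by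
  simp only [mem_insert, mem_singleton, not_or] at hx hy
  by_cases hxy : D.Adj x y
  · exact Adj.reachable (by simp [*])
  obtain ⟨z, hzx, hzy⟩ := hD x y (by rintro rfl; exact hbx hby) hxy
  have hz : z ≠ v ∧ z ≠ a ∧ z ≠ b := ⟨by rintro rfl; have := (hv x).1 hzx; tauto,
    by rintro rfl; exact hay hzy, by rintro rfl; exact hbx hzx⟩
  exact (Adj.reachable (v := z) (by simp [*, hzx.symm])).trans (Adj.reachable (by simp [*]))

theorem exists_potential_of_forall_adj_imp_adj (hD : D.DiamLeTwo) (hΔ : NoIsolatedVerts Dᶜ)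
    (hv : ∀ z, D.Adj v z ↔ z = a ∨ z = b)
    (hB : ∀ x ∉ ({v, a, b} : Finset V), D.Adj b x → D.Adj a x) :
    ∃ ψ : V → ℕ, ∀ x ∉ ({v, a, b} : Finset V),
      (D.Adj a x ∧ D.Adj b x) ∨ ∃ z ∉ ({v, a, b} : Finset V), D.Adj x z ∧ ψ z < ψ x := by
  classical
  have hab : ¬D.Adj a b := by
    intro hab
    obtain ⟨u, hau, hadj⟩ : ∃ u, a ≠ u ∧ ¬D.Adj a u := by simpa using hΔ a
    refine hadj ?_
    by_cases huv : u = v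
    · exact huv ▸ ((hv a).2 (Or.inl rfl)).symm
    by_cases hub : u = b
    · exact hub ▸ hab
    have hu : u ∉ ({v, a, b} : Finset V) := by simp [huv, hau.symm, hub]
    exact (hD.adj_or_adj_of_notMem hv hu).elim id (hB u hu)
  refine ⟨fun x ↦ if D.Adj b x then 0 else 1, fun x hx ↦ ?_⟩
  by_cases hbx : D.Adj b x
  · exact Or.inl ⟨hB x hx hbx, hbx⟩
  simp only [mem_insert, mem_singleton, not_or] at hx
  obtain ⟨z, hzx, hzb⟩ := hD x b hx.2.2 fun h ↦ hbx h.symm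
  refine Or.inr ⟨z, ?_, hzx.symm, by simp [hbx, hzb.symm]⟩
  simp only [mem_insert, mem_singleton, not_or]
  exact ⟨by rintro rfl; have := (hv x).1 hzx; tauto, by rintro rfl; exact hab hzb,
    by rintro rfl; exact hzb.ne rfl⟩

theorem exists_potential (hD : D.DiamLeTwo) (hΔ : NoIsolatedVerts Dᶜ)
    (hv : ∀ z, D.Adj v z ↔ z = a ∨ z = b) :
    ∃ (ψ : V → ℕ) (x₀ : V), ∀ x ∉ ({v, a, b} : Finset V), x ≠ x₀ →
      (D.Adj a x ∧ D.Adj b x) ∨ ∃ z ∉ ({v, a, b} : Finset V), D.Adj x z ∧ ψ z < ψ x := by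
  by_cases hB : ∀ x ∉ ({v, a, b} : Finset V), D.Adj b x → D.Adj a x
  · obtain ⟨ψ, hψ⟩ := hD.exists_potential_of_forall_adj_imp_adj hΔ hv hB
    exact ⟨ψ, v, fun x hx _ ↦ hψ x hx⟩
  by_cases hA : ∀ x ∉ ({v, a, b} : Finset V), D.Adj a x → D.Adj b x
  · rw [pair_comm a b] at hA ⊢
    obtain ⟨ψ, hψ⟩ := hD.exists_potential_of_forall_adj_imp_adj hΔ
      (fun z ↦ (hv z).trans or_comm) hA
    exact ⟨ψ, v, fun x hx _ ↦ (hψ x hx).imp_left And.symm⟩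
  push Not at hA hB
  obtain ⟨x₀, hx₀, hax₀, hbx₀⟩ := hA
  obtain ⟨y₀, hy₀, hby₀, hay₀⟩ := hB
  set H := ((⊤ : D.Subgraph).deleteVerts ({v, a, b} : Finset V)).spanningCoe
  refine ⟨H.dist x₀, x₀, fun x hx hxx₀ ↦ ?_⟩
  by_cases hC : D.Adj a x ∧ D.Adj b x
  · exact Or.inl hC
  have hreach : H.Reachable x₀ x := by
    rcases hD.adj_or_adj_of_notMem hv hx with hax | hbx
    · exact (hD.reachable_of_not_adj_of_not_adj hv hx₀ hy₀ hbx₀ hay₀ hby₀).trans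
        (hD.reachable_of_not_adj_of_not_adj hv hx hy₀ (fun h ↦ hC ⟨hax, h⟩) hay₀ hby₀).symm
    · exact hD.reachable_of_not_adj_of_not_adj hv hx₀ hx hbx₀ (fun h ↦ hC ⟨h, hbx⟩) hbx
  obtain ⟨z, hxz, hlt⟩ := hreach.exists_adj_dist_lt (Ne.symm hxx₀)
  simp only [H, Subgraph.spanningCoe_adj, Subgraph.deleteVerts_adj, Subgraph.verts_top,
    Set.mem_univ, Subgraph.top_adj, coe_insert, coe_singleton, true_and] at hxz
  exact Or.inr ⟨z, by simpa using hxz.2.1, hxz.2.2, hlt⟩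

end NeighbourPair

end SimpleGraph.DiamLeTwo

namespace SimpleGraph

open Finset

variable {V : Type*} [Fintype V] [DecidableEq V] {D : SimpleGraph V} [DecidableRel D.Adj]

def layeredPotential (v a b : V) (ψ : V → ℕ) (x : V) : ℕ :=
  if x = v then 0 else if x = a ∨ x = b then 1 else ψ x + 2

variable {v a b : V} {ψ : V → ℕ} {x₀ : V}

theorem le_card_filter_layeredPotential_lt (hv : ∀ z, D.Adj v z ↔ z = a ∨ z = b)
    (hab : a ≠ b) (hcover : ∀ x ∉ ({v, a, b} : Finset V), D.Adj a x ∨ D.Adj b x)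
    (hψ : ∀ x ∉ ({v, a, b} : Finset V), x ≠ x₀ →
      (D.Adj a x ∧ D.Adj b x) ∨ ∃ z ∉ ({v, a, b} : Finset V), D.Adj x z ∧ ψ z < ψ x) (x : V) :
    (if x ≠ v then 1 else 0) + (if x ∈ ({v, a, b}ᶜ : Finset V).erase x₀ then 1 else 0) ≤
      #{y ∈ D.neighborFinset x | layeredPotential v a b ψ y < layeredPotential v a b ψ x} := by
  set φ := layeredPotential v a b ψ
  have hmem : ∀ y, y ∈ ({y ∈ D.neighborFinset x | φ y < φ x} : Finset V) ↔
      D.Adj x y ∧ φ y < φ x := by simp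
  by_cases hxv : x = v
  · simp [hxv]
  by_cases hxab : x = a ∨ x = b
  · have hxW : x ∉ ({v, a, b}ᶜ : Finset V).erase x₀ := fun h ↦
      mem_compl.1 (mem_of_mem_erase h) (by rcases hxab with rfl | rfl <;> simp)
    rw [if_pos hxv, if_neg hxW, add_zero, one_le_card]
    exact ⟨v, (hmem v).2 ⟨((hv x).2 hxab).symm, by simp [φ, layeredPotential, hxv, hxab]⟩⟩
  have hx : x ∉ ({v, a, b} : Finset V) := by simp only [mem_insert, mem_singleton]; tauto
  have hφx : φ x = ψ x + 2 := by simp [φ, layeredPotential, hxv, hxab]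
  have ha : D.Adj a x → a ∈ ({y ∈ D.neighborFinset x | φ y < φ x} : Finset V) := fun h ↦
    (hmem a).2 ⟨h.symm, by simp [φ, layeredPotential, hφx, ((hv a).2 (Or.inl rfl)).ne']⟩
  have hb : D.Adj b x → b ∈ ({y ∈ D.neighborFinset x | φ y < φ x} : Finset V) := fun h ↦
    (hmem b).2 ⟨h.symm, by simp [φ, layeredPotential, hφx, ((hv b).2 (Or.inr rfl)).ne']⟩
  by_cases hx₀ : x = x₀
  · rw [if_pos hxv, if_neg (by simp [hx₀]), add_zero, one_le_card]
    rcases hcover x hx with h | h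
    exacts [⟨a, ha h⟩, ⟨b, hb h⟩]
  rw [if_pos hxv, if_pos (mem_erase.2 ⟨hx₀, mem_compl.2 hx⟩)]
  rcases hψ x hx hx₀ with ⟨hax, hbx⟩ | ⟨z, hz, hxz, hlt⟩
  · exact one_lt_card.2 ⟨a, ha hax, b, hb hbx, hab⟩
  simp only [mem_insert, mem_singleton, not_or] at hz
  have hzlow : z ∈ ({y ∈ D.neighborFinset x | φ y < φ x} : Finset V) :=
    (hmem z).2 ⟨hxz, by simp [φ, layeredPotential, hφx, hz, hlt]⟩
  rcases hcover x hx with h | h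
  · exact one_lt_card.2 ⟨a, ha h, z, hzlow, Ne.symm hz.2.1⟩
  · exact one_lt_card.2 ⟨b, hb h, z, hzlow, Ne.symm hz.2.2⟩

theorem two_mul_card_sub_five_le_of_potential (hv : ∀ z, D.Adj v z ↔ z = a ∨ z = b)
    (hab : a ≠ b) (hcover : ∀ x ∉ ({v, a, b} : Finset V), D.Adj a x ∨ D.Adj b x)
    (hψ : ∀ x ∉ ({v, a, b} : Finset V), x ≠ x₀ →
      (D.Adj a x ∧ D.Adj b x) ∨ ∃ z ∉ ({v, a, b} : Finset V), D.Adj x z ∧ ψ z < ψ x) :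
    2 * Fintype.card V - 5 ≤ #D.edgeFinset := by
  have hW : #({v, a, b}ᶜ : Finset V) = Fintype.card V - 3 := by
    rw [card_compl, card_eq_three.2 ⟨v, a, b, ((hv a).2 (Or.inl rfl)).ne,
      ((hv b).2 (Or.inr rfl)).ne, hab, rfl⟩]
  have := (sum_le_sum fun x _ ↦ le_card_filter_layeredPotential_lt hv hab hcover hψ x).trans
    (D.sum_card_filter_lt_le_card_edgeFinset (layeredPotential v a b ψ))
  rw [sum_add_distrib, sum_boole, sum_boole, Nat.cast_id, Nat.cast_id, filter_ne',
    filter_mem_eq_inter, univ_inter, card_erase_of_mem (mem_univ v), card_univ] at this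
  have := pred_card_le_card_erase (s := ({v, a, b}ᶜ : Finset V)) (a := x₀)
  omega

theorem DiamLeTwo.two_mul_card_sub_five_le (hD : D.DiamLeTwo) (hΔ : NoIsolatedVerts Dᶜ) :
    2 * Fintype.card V - 5 ≤ #D.edgeFinset := by
  cases isEmpty_or_nonempty V
  · simp
  obtain ⟨v, hv⟩ := D.exists_minimal_degree_vertex
  by_cases h3 : 3 ≤ D.degree v
  · exact hD.two_mul_card_sub_five_le_of_three_le_degree fun x ↦
      (h3.trans_eq hv.symm).trans (D.minDegree_le_degree x)
  obtain ⟨a, b, hab, hN⟩ :=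
    card_eq_two.1 (show D.degree v = 2 by have := hD.two_le_degree hΔ v; omega)
  have hNv : ∀ z, D.Adj v z ↔ z = a ∨ z = b := fun z ↦ by
    rw [← mem_neighborFinset, hN, mem_insert, mem_singleton]
  obtain ⟨ψ, x₀, hψ⟩ := hD.exists_potential hΔ hNv
  exact two_mul_card_sub_five_le_of_potential hNv hab (fun x ↦ hD.adj_or_adj_of_notMem hNv) hψ

theorem cycleGraph_five_diamLeTwo : (cycleGraph 5).DiamLeTwo := by
  unfold DiamLeTwo; decide

theorem noIsolatedVerts_cycleGraph_five : NoIsolatedVerts (cycleGraph 5) := by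
  unfold NoIsolatedVerts; decide

theorem noIsolatedVerts_compl_cycleGraph_five : NoIsolatedVerts (cycleGraph 5)ᶜ := by
  unfold NoIsolatedVerts; decide

theorem cycleGraph_five_adj {i j : Fin 5} : (cycleGraph 5).Adj i j ↔
    i.val + 1 = j.val ∨ j.val + 1 = i.val ∨ i.val = 0 ∧ j.val = 4 ∨ i.val = 4 ∧ j.val = 0 := by
  revert i j; decide

end SimpleGraph

def clampFive (n : ℕ) (x : Fin n) : Fin 5 := ⟨min x 4, by omega⟩

theorem clampFive_surjective {n : ℕ} (hn : 5 ≤ n) : Function.Surjective (clampFive n) :=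
  fun i ↦ ⟨⟨i, by omega⟩, Fin.ext (by simp [clampFive]; omega)⟩

def blowUpC5 (n : ℕ) : SimpleGraph (Fin n) := (cycleGraph 5).comap (clampFive n)

theorem blowUpC5_adj {n : ℕ} {x y : Fin n} : (blowUpC5 n).Adj x y ↔
    min x.val 4 + 1 = min y.val 4 ∨ min y.val 4 + 1 = min x.val 4 ∨
      min x.val 4 = 0 ∧ 4 ≤ y.val ∨ 4 ≤ x.val ∧ min y.val 4 = 0 := by
  rw [blowUpC5, comap_adj, cycleGraph_five_adj]
  simp only [clampFive]
  omega

theorem ncard_edgeSet_blowUpC5_le {n : ℕ} (hn : 5 ≤ n) :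
    (blowUpC5 n).edgeSet.ncard ≤ 2 * n - 5 := by
  let i : ℕ → Fin n := fun k ↦ ⟨min k 4, by omega⟩
  let A := Finset.Ici (i 4)
  let E : Finset (Sym2 (Fin n)) :=
    {s(i 0, i 1), s(i 1, i 2), s(i 2, i 3)} ∪ A.image (s(·, i 0)) ∪ A.image (s(·, i 3))
  have hsub : (blowUpC5 n).edgeSet ⊆ E := by
    intro e he
    induction e with | _ x y => ?_
    rw [mem_edgeSet, blowUpC5_adj] at he
    simp only [E, A, i, Finset.coe_union, Finset.coe_insert, Finset.coe_singleton,
      Finset.coe_image, Finset.coe_Ici, Set.mem_union, Set.mem_insert_iff, Set.mem_singleton_iff,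
      Set.mem_image, Set.mem_Ici, Sym2.eq, Sym2.rel_iff', Prod.mk.injEq, Prod.swap_prod_mk,
      and_or_left, exists_or, existsAndEq, true_and]
    simp only [Fin.ext_iff, Fin.le_def]
    have hx : x.val = 0 ∨ x.val = 1 ∨ x.val = 2 ∨ x.val = 3 ∨ 4 ≤ x.val := by omega
    have hy : y.val = 0 ∨ y.val = 1 ∨ y.val = 2 ∨ y.val = 3 ∨ 4 ≤ y.val := by omega
    rcases hx with hx | hx | hx | hx | hx <;> rcases hy with hy | hy | hy | hy | hy <;>
      simp_all
  have hA : A.card = n - 4 := by simp [A, i]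
  calc (blowUpC5 n).edgeSet.ncard ≤ (E : Set (Sym2 (Fin n))).ncard := Set.ncard_le_ncard hsub
    _ = E.card := Set.ncard_coe_finset E
    _ ≤ 3 + A.card + A.card := by
      refine (Finset.card_union_le _ _).trans (add_le_add ((Finset.card_union_le _ _).trans
        (add_le_add Finset.card_le_three Finset.card_image_le)) Finset.card_image_le)
    _ = 2 * n - 5 := by omega

/-- For `n ≥ 5`, the `1`-total bondage number of the complete graph `K_n` is
`2n − 5`. -/
theorem kTotalBondage_completeGraph_one (n : ℕ) (hn : 5 ≤ n) :
    kTotalBondage (⊤ : SimpleGraph (Fin n)) 1 = 2 * n - 5 := by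
  have : Nontrivial (Fin n) := Fin.nontrivial_iff_two_le.2 (by omega)
  rw [kTotalBondage_top_one]
  have hD : (blowUpC5 n).DiamLeTwo :=
    cycleGraph_five_diamLeTwo.comap noIsolatedVerts_cycleGraph_five (clampFive_surjective hn)
  have hΔ : NoIsolatedVerts (blowUpC5 n)ᶜ :=
    noIsolatedVerts_compl_comap noIsolatedVerts_compl_cycleGraph_five (clampFive_surjective hn)
  refine le_antisymm (le_trans (Nat.sInf_le ⟨_, rfl, hΔ, hD⟩) (ncard_edgeSet_blowUpC5_le hn)) ?_
  refine le_csInf ⟨_, _, rfl, hΔ, hD⟩ ?_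
  rintro _ ⟨D, rfl, hΔ, hD⟩
  classical
  simpa [← coe_edgeFinset, Set.ncard_coe_finset] using hD.two_mul_card_sub_five_le hΔ
end

section
/- Let a and b be integers with 2 ≤ a ≤ b. Then the 1-total bondage number of the complete bipartite graph K_{a,b} equals a: b_t^1(K_{a,b}) = a. -/
open SimpleGraph

lemma tdn_completeBipartite (a b : ℕ) (ha : 0 < a) (hb : 0 < b) :
    totalDominationNumber (completeBipartiteGraph (Fin a) (Fin b)) = 2 := by
  set G := completeBipartiteGraph (Fin a) (Fin b) with hG
  have h2 : (2 : ℕ) ∈ {n : ℕ | ∃ S : Set (Fin a ⊕ Fin b), S.ncard = n ∧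
      IsTotalDominatingSet G S} := by
    refine ⟨{Sum.inl ⟨0, ha⟩, Sum.inr ⟨0, hb⟩}, ?_, ?_⟩
    · rw [Set.ncard_pair (by simp)]
    · intro v
      rcases v with i | j
      · exact ⟨Sum.inr ⟨0, hb⟩, by simp, by simp [hG]⟩
      · exact ⟨Sum.inl ⟨0, ha⟩, by simp, by simp [hG]⟩
  refine le_antisymm (Nat.sInf_le h2) (le_csInf ⟨2, h2⟩ ?_)
  rintro n ⟨S, rfl, hS⟩
  obtain ⟨u, hu, hadj⟩ := hS (Sum.inl ⟨0, ha⟩)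
  obtain ⟨u', hu', hadj'⟩ := hS (Sum.inr ⟨0, hb⟩)
  obtain ⟨q, rfl⟩ : ∃ q, u = Sum.inr q := by
    rcases u with i | j
    · simp [hG] at hadj
    · exact ⟨_, rfl⟩
  obtain ⟨p, rfl⟩ : ∃ p, u' = Sum.inl p := by
    rcases u' with i | j
    · exact ⟨_, rfl⟩
    · simp [hG] at hadj'
  exact (Set.one_lt_ncard_iff (Set.toFinite S)).mpr ⟨Sum.inr q, Sum.inl p, hu, hu', by simp⟩

/-- For `2 ≤ a ≤ b`, the `1`-total bondage number of the complete bipartite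
graph `K_{a,b}` equals `a`. -/
theorem kTotalBondage_completeBipartiteGraph_one (a b : ℕ) (ha : 2 ≤ a)
    (hab : a ≤ b) :
    kTotalBondage (completeBipartiteGraph (Fin a) (Fin b)) 1 = a := by
  have hb : 2 ≤ b := le_trans ha hab
  set G := completeBipartiteGraph (Fin a) (Fin b) with hG
  have hγ : totalDominationNumber G = 2 := tdn_completeBipartite a b (by omega) (by omega)
  -- the candidate edge set
  set f : Fin a → Sym2 (Fin a ⊕ Fin b) :=
    fun i => s(Sum.inl i, Sum.inr (Fin.castLE hab i)) with hf
  have hfinj : Function.Injective f := by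
    intro i j h
    simp only [hf, Sym2.eq_iff] at h
    rcases h with ⟨h1, _⟩ | ⟨h1, _⟩
    · exact Sum.inl_injective h1
    · exact absurd h1 (by simp)
  set F₀ : Set (Sym2 (Fin a ⊕ Fin b)) := Set.range f with hF₀
  have hmemF₀ : ∀ e, e ∈ F₀ ↔ ∃ i : Fin a, f i = e := by
    intro e; simp [hF₀]
  -- membership of a in the defining set
  have haM : a ∈ {m : ℕ | ∃ F : Set (Sym2 (Fin a ⊕ Fin b)), F ⊆ G.edgeSet ∧ F.ncard = m ∧
      NoIsolatedVerts (G.deleteEdges F) ∧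
      totalDominationNumber G + 1 ≤ totalDominationNumber (G.deleteEdges F)} := by
    have hiso : NoIsolatedVerts (G.deleteEdges F₀) := by
      intro v
      rcases v with i | j
      · haveI : Nontrivial (Fin b) := Fin.nontrivial_iff_two_le.mpr hb
        obtain ⟨j, hj⟩ := exists_ne (Fin.castLE hab i)
        refine ⟨Sum.inr j, ?_⟩
        rw [SimpleGraph.deleteEdges_adj]
        refine ⟨by simp [hG], ?_⟩
        rintro ⟨i', hi'⟩
        simp only [hf, Sym2.eq_iff] at hi'
        rcases hi' with ⟨h1, h2⟩ | ⟨h1, _⟩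
        · exact hj (by rw [← Sum.inr_injective h2, Sum.inl_injective h1])
        · exact absurd h1 (by simp)
      · have h01 : (⟨0, by omega⟩ : Fin a) ≠ ⟨1, by omega⟩ := by simp
        have : Fin.castLE hab (⟨0, by omega⟩ : Fin a) ≠ j ∨
            Fin.castLE hab (⟨1, by omega⟩ : Fin a) ≠ j := by
          by_contra h
          push_neg at h
          exact h01 (Fin.castLE_injective hab (h.1.trans h.2.symm))
        obtain ⟨i, hij⟩ : ∃ i : Fin a, Fin.castLE hab i ≠ j := by
          rcases this with h | h
          · exact ⟨_, h⟩
          · exact ⟨_, h⟩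
        refine ⟨Sum.inl i, ?_⟩
        rw [SimpleGraph.deleteEdges_adj]
        refine ⟨by simp [hG], ?_⟩
        rintro ⟨i', hi'⟩
        simp only [hf, Sym2.eq_iff] at hi'
        rcases hi' with ⟨h1, _⟩ | ⟨h1, h2⟩
        · exact absurd h1 (by simp)
        · obtain rfl : i' = i := Sum.inl_injective h1
          exact hij (Sum.inr_injective h2)
    refine ⟨F₀, ?_, ?_, hiso, ?_⟩
    · rintro e ⟨i, rfl⟩
      simp [hG, SimpleGraph.mem_edgeSet, hf]
    · rw [hF₀, ← Set.image_univ, Set.ncard_image_of_injective _ hfinj, Set.ncard_univ,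
        Nat.card_eq_fintype_card, Fintype.card_fin]
    · rw [hγ]
      have hne : {n : ℕ | ∃ S : Set (Fin a ⊕ Fin b), S.ncard = n ∧
          IsTotalDominatingSet (G.deleteEdges F₀) S}.Nonempty := by
        refine ⟨(Set.univ : Set (Fin a ⊕ Fin b)).ncard, Set.univ, rfl, ?_⟩
        intro v
        obtain ⟨u, hu⟩ := hiso v
        exact ⟨u, Set.mem_univ u, hu⟩
      refine le_csInf hne ?_
      rintro n ⟨S, rfl, hS⟩
      by_contra hlt
      push_neg at hlt
      obtain ⟨u, hu, hadj⟩ := hS (Sum.inl ⟨0, by omega⟩)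
      obtain ⟨u', hu', hadj'⟩ := hS (Sum.inr ⟨0, by omega⟩)
      obtain ⟨q, rfl⟩ : ∃ q, u = Sum.inr q := by
        rcases u with i | j
        · rw [SimpleGraph.deleteEdges_adj] at hadj; simp [hG] at hadj
        · exact ⟨_, rfl⟩
      obtain ⟨p, rfl⟩ : ∃ p, u' = Sum.inl p := by
        rcases u' with i | j
        · exact ⟨_, rfl⟩
        · rw [SimpleGraph.deleteEdges_adj] at hadj'; simp [hG] at hadj'
      have hsub : {Sum.inl p, Sum.inr q} ⊆ S := by
        rintro x (rfl | rfl) <;> assumption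
      have hSeq : S = {Sum.inl p, Sum.inr q} := by
        refine (Set.eq_of_subset_of_ncard_le hsub ?_ (Set.toFinite S)).symm
        rw [Set.ncard_pair (by simp)]
        omega
      obtain ⟨w, hw, hwadj⟩ := hS (Sum.inr (Fin.castLE hab p))
      rw [hSeq] at hw
      rcases hw with rfl | rfl
      · rw [SimpleGraph.deleteEdges_adj] at hwadj
        exact hwadj.2 ⟨p, by rw [hf]; exact Sym2.eq_swap⟩
      · rw [SimpleGraph.deleteEdges_adj] at hwadj
        simp [hG] at hwadj
  -- lower bound: every member of the set is ≥ a
  have hlb : ∀ m ∈ {m : ℕ | ∃ F : Set (Sym2 (Fin a ⊕ Fin b)), F ⊆ G.edgeSet ∧ F.ncard = m ∧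
      NoIsolatedVerts (G.deleteEdges F) ∧
      totalDominationNumber G + 1 ≤ totalDominationNumber (G.deleteEdges F)}, a ≤ m := by
    rintro m ⟨F, hFsub, rfl, hFiso, hFγ⟩
    rw [hγ] at hFγ
    by_cases hA : ∀ i : Fin a, ∃ j : Fin b, s(Sum.inl i, Sum.inr j) ∈ F
    · choose e he using hA
      have hinj : Function.Injective (fun i : Fin a => s(Sum.inl i, Sum.inr (e i))) := by
        intro i j h
        simp only [Sym2.eq_iff] at h
        rcases h with ⟨h1, _⟩ | ⟨h1, _⟩
        · exact Sum.inl_injective h1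
        · exact absurd h1 (by simp)
      calc a = (Set.range fun i : Fin a => s(Sum.inl i, Sum.inr (e i))).ncard := by
              rw [← Set.image_univ, Set.ncard_image_of_injective _ hinj, Set.ncard_univ,
                Nat.card_eq_fintype_card, Fintype.card_fin]
        _ ≤ F.ncard := Set.ncard_le_ncard (by rintro x ⟨i, rfl⟩; exact he i) (Set.toFinite F)
    · by_cases hB : ∀ j : Fin b, ∃ i : Fin a, s(Sum.inl i, Sum.inr j) ∈ F
      · choose e he using hB
        have hinj : Function.Injective (fun j : Fin b => s(Sum.inl (e j), Sum.inr j)) := by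
          intro i j h
          simp only [Sym2.eq_iff] at h
          rcases h with ⟨_, h2⟩ | ⟨h1, _⟩
          · exact Sum.inr_injective h2
          · exact absurd h1 (by simp)
        have : b ≤ F.ncard := by
          calc b = (Set.range fun j : Fin b => s(Sum.inl (e j), Sum.inr j)).ncard := by
                rw [← Set.image_univ, Set.ncard_image_of_injective _ hinj, Set.ncard_univ,
                  Nat.card_eq_fintype_card, Fintype.card_fin]
            _ ≤ F.ncard := Set.ncard_le_ncard (by rintro x ⟨j, rfl⟩; exact he j)
                (Set.toFinite F)
        omega
      · exfalso
        push_neg at hA hB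
        obtain ⟨i₀, hi₀⟩ := hA
        obtain ⟨j₀, hj₀⟩ := hB
        have hTDS : IsTotalDominatingSet (G.deleteEdges F) {Sum.inl i₀, Sum.inr j₀} := by
          intro v
          rcases v with k | k
          · refine ⟨Sum.inr j₀, by simp, ?_⟩
            rw [SimpleGraph.deleteEdges_adj]
            exact ⟨by simp [hG], hj₀ k⟩
          · refine ⟨Sum.inl i₀, by simp, ?_⟩
            rw [SimpleGraph.deleteEdges_adj]
            refine ⟨by simp [hG], ?_⟩
            rw [Sym2.eq_swap]
            exact hi₀ k
        have h2' : totalDominationNumber (G.deleteEdges F) ≤ 2 :=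
          Nat.sInf_le ⟨{Sum.inl i₀, Sum.inr j₀}, Set.ncard_pair (by simp), hTDS⟩
        omega
  exact le_antisymm (Nat.sInf_le haM) (le_csInf ⟨a, haM⟩ hlb)
end

section
/- Let k be a positive integer and let a and b be integers with k < a ≤ b. Then the k-total bondage number of the complete bipartite graph K_{a,b} satisfies b_t^k(K_{a,b}) ≤ ka. -/
open SimpleGraph

section Aux

variable {k a b : ℕ}

/-- the function enumerating the deleted edges -/
def bondf (k a b : ℕ) (hka : k < a) (hab : a ≤ b) (p : Fin k × Fin a) :
    Sym2 (Fin a ⊕ Fin b) :=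
  if p.2.val = p.1.val then s(Sum.inl p.2, Sum.inr ⟨k, lt_of_lt_of_le hka hab⟩)
  else s(Sum.inl p.2, Sum.inr ⟨p.1.val, lt_of_le_of_lt p.1.isLt.le
    (lt_of_lt_of_le hka hab)⟩)

/-- the deleted edge set -/
def bondF (k a b : ℕ) (hka : k < a) (hab : a ≤ b) : Set (Sym2 (Fin a ⊕ Fin b)) :=
  Set.range (bondf k a b hka hab)

lemma mem_bondF_iff (hka : k < a) (hab : a ≤ b) (x : Fin a) (y : Fin b) :
    s(Sum.inl x, Sum.inr y) ∈ bondF k a b hka hab ↔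
      ((y.val < k ∧ x.val ≠ y.val) ∨ (y.val = k ∧ x.val < k)) := by
  constructor
  · rintro ⟨⟨i, j⟩, hp⟩
    rw [bondf] at hp
    split_ifs at hp with hij
    · rw [Sym2.eq_iff] at hp
      rcases hp with ⟨h1, h2⟩ | ⟨h1, h2⟩
      · injection h1 with h1
        injection h2 with h2
        subst h1
        right
        refine ⟨?_, ?_⟩
        · rw [← h2]
        · rw [hij]; exact i.isLt
      · exact absurd h1 (by simp)
    · rw [Sym2.eq_iff] at hp
      rcases hp with ⟨h1, h2⟩ | ⟨h1, h2⟩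
      · injection h1 with h1
        injection h2 with h2
        subst h1
        left
        refine ⟨?_, ?_⟩
        · rw [← h2]; exact i.isLt
        · rw [← h2]; simpa using hij
      · exact absurd h1 (by simp)
  · rintro (⟨hyk, hxy⟩ | ⟨hyk, hxk⟩)
    · refine ⟨(⟨y.val, hyk⟩, x), ?_⟩
      rw [bondf]
      have hc : ¬ ((⟨y.val, hyk⟩, x) : Fin k × Fin a).2.val =
          ((⟨y.val, hyk⟩, x) : Fin k × Fin a).1.val := hxy
      rw [if_neg hc]
    · refine ⟨(⟨x.val, hxk⟩, x), ?_⟩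
      rw [bondf]
      rw [if_pos rfl]
      have hy2 : (⟨k, lt_of_lt_of_le hka hab⟩ : Fin b) = y := Fin.ext hyk.symm
      rw [hy2]

lemma bondF_subset (hka : k < a) (hab : a ≤ b) :
    bondF k a b hka hab ⊆ (completeBipartiteGraph (Fin a) (Fin b)).edgeSet := by
  rintro e ⟨⟨i, j⟩, rfl⟩
  rw [bondf]
  split_ifs <;> simp [SimpleGraph.mem_edgeSet]

lemma bondF_ncard (hka : k < a) (hab : a ≤ b) :
    (bondF k a b hka hab).ncard ≤ k * a := by
  rw [bondF, ← Set.image_univ]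
  calc (bondf k a b hka hab '' Set.univ).ncard
      ≤ (Set.univ : Set (Fin k × Fin a)).ncard := Set.ncard_image_le (Set.toFinite _)
    _ = k * a := by simp [Set.ncard_univ]

lemma adj_deleteEdges_inr (hka : k < a) (hab : a ≤ b) (x : Fin a) (y : Fin b) :
    ((completeBipartiteGraph (Fin a) (Fin b)).deleteEdges
      (bondF k a b hka hab)).Adj (Sum.inl x) (Sum.inr y) ↔
      ¬((y.val < k ∧ x.val ≠ y.val) ∨ (y.val = k ∧ x.val < k)) := by
  rw [SimpleGraph.deleteEdges_adj, mem_bondF_iff hka hab]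
  simp

lemma totalDominationNumber_completeBipartite (hka : k < a) (hab : a ≤ b) :
    totalDominationNumber (completeBipartiteGraph (Fin a) (Fin b)) = 2 := by
  have h0a : 0 < a := lt_of_le_of_lt (Nat.zero_le k) hka
  have h0b : 0 < b := lt_of_lt_of_le h0a hab
  have h2 : (2 : ℕ) ∈ {n : ℕ | ∃ S : Set (Fin a ⊕ Fin b), S.ncard = n ∧
      IsTotalDominatingSet (completeBipartiteGraph (Fin a) (Fin b)) S} := by
    refine ⟨{Sum.inl ⟨0, h0a⟩, Sum.inr ⟨0, h0b⟩}, ?_, ?_⟩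
    · exact Set.ncard_pair (by simp)
    · intro v
      rcases v with x | y
      · exact ⟨Sum.inr ⟨0, h0b⟩, by simp, by simp⟩
      · exact ⟨Sum.inl ⟨0, h0a⟩, by simp, by simp⟩
  apply le_antisymm
  · exact Nat.sInf_le h2
  · apply le_csInf ⟨2, h2⟩
    rintro n ⟨S, hcard, hdom⟩
    by_contra hlt
    push_neg at hlt
    interval_cases n
    · obtain ⟨u, hu, -⟩ := hdom (Sum.inl ⟨0, h0a⟩)
      rw [Set.ncard_eq_zero (Set.toFinite S)] at hcard
      rw [hcard] at hu
      exact hu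
    · rw [Set.ncard_eq_one] at hcard
      obtain ⟨u, rfl⟩ := hcard
      obtain ⟨w, hw, hadj⟩ := hdom u
      rw [Set.mem_singleton_iff] at hw
      subst hw
      exact (completeBipartiteGraph (Fin a) (Fin b)).irrefl hadj

lemma ncard_lt_k (hka : k < a) : {x : Fin a | x.val < k}.ncard = k := by
  have h : {x : Fin a | x.val < k} = (Fin.castLE hka.le) '' Set.univ := by
    ext x
    simp only [Set.mem_setOf_eq, Set.image_univ, Set.mem_range]
    constructor
    · intro hx; exact ⟨⟨x.val, hx⟩, Fin.ext rfl⟩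
    · rintro ⟨t, rfl⟩; exact t.isLt
  rw [h, Set.ncard_image_of_injective _ (Fin.castLE_injective hka.le)]
  simp [Set.ncard_univ]

end Aux

/-- For `k < a ≤ b`, the `k`-total bondage number of the complete bipartite
graph `K_{a,b}` is at most `ka`. -/
theorem kTotalBondage_completeBipartiteGraph_le (k a b : ℕ) (hk : 1 ≤ k)
    (hka : k < a) (hab : a ≤ b) :
    kTotalBondage (completeBipartiteGraph (Fin a) (Fin b)) k ≤ k * a := by
  set G := completeBipartiteGraph (Fin a) (Fin b) with hG
  set F := bondF k a b hka hab with hF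
  have hkb : k < b := lt_of_lt_of_le hka hab
  have h0a : 0 < a := lt_of_le_of_lt (Nat.zero_le k) hka
  have h0b : 0 < b := lt_of_lt_of_le h0a hab
  -- no isolated vertices
  have hiso : NoIsolatedVerts (G.deleteEdges F) := by
    intro v
    rcases v with x | y
    · by_cases hx : x.val < k
      · refine ⟨Sum.inr ⟨x.val, lt_of_lt_of_le (lt_of_lt_of_le hx hka.le) hab⟩, ?_⟩
        rw [hG, hF, adj_deleteEdges_inr hka hab]
        push_neg
        exact ⟨fun _ => rfl, fun h => le_of_eq h.symm⟩
      · refine ⟨Sum.inr ⟨k, hkb⟩, ?_⟩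
        rw [hG, hF, adj_deleteEdges_inr hka hab]
        push_neg
        exact ⟨fun h => absurd h (lt_irrefl k), fun _ => not_lt.mp hx⟩
    · rcases lt_trichotomy y.val k with hy | hy | hy
      · refine ⟨Sum.inl ⟨y.val, lt_trans hy hka⟩, ?_⟩
        rw [(G.deleteEdges F).adj_comm, hG, hF, adj_deleteEdges_inr hka hab]
        push_neg
        exact ⟨fun _ => rfl, fun h => absurd (h ▸ hy) (lt_irrefl k)⟩
      · refine ⟨Sum.inl ⟨k, hka⟩, ?_⟩
        rw [(G.deleteEdges F).adj_comm, hG, hF, adj_deleteEdges_inr hka hab]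
        push_neg
        exact ⟨fun h => absurd (hy ▸ h) (lt_irrefl k), fun _ => le_refl k⟩
      · refine ⟨Sum.inl ⟨0, h0a⟩, ?_⟩
        rw [(G.deleteEdges F).adj_comm, hG, hF, adj_deleteEdges_inr hka hab]
        push_neg
        exact ⟨fun h => absurd h (not_lt.mpr hy.le), fun h => absurd h (ne_of_gt hy)⟩
  -- lower bound on total domination number of G - F
  have hlow : totalDominationNumber G + k ≤ totalDominationNumber (G.deleteEdges F) := by
    rw [hG, totalDominationNumber_completeBipartite hka hab, ← hG]
    have hne : {n : ℕ | ∃ S : Set (Fin a ⊕ Fin b), S.ncard = n ∧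
        IsTotalDominatingSet (G.deleteEdges F) S}.Nonempty := by
      refine ⟨(Set.univ : Set (Fin a ⊕ Fin b)).ncard, Set.univ, rfl, ?_⟩
      intro v
      obtain ⟨u, hu⟩ := hiso v
      exact ⟨u, Set.mem_univ u, hu⟩
    apply le_csInf hne
    rintro n ⟨S, hcard, hdom⟩
    -- claim 1: each inl ⟨i⟩, i < k, is in S
    have hc1 : ∀ i : ℕ, (hi : i < k) → Sum.inl (⟨i, lt_trans hi hka⟩ : Fin a) ∈ S := by
      intro i hi
      obtain ⟨u, huS, hadj⟩ := hdom (Sum.inr (⟨i, lt_trans hi hkb⟩ : Fin b))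
      rcases u with x | y
      · rw [(G.deleteEdges F).adj_comm, hG, hF, adj_deleteEdges_inr hka hab] at hadj
        push_neg at hadj
        have hxi : x.val = i := hadj.1 hi
        have hx : x = (⟨i, lt_trans hi hka⟩ : Fin a) := Fin.ext hxi
        rwa [← hx]
      · exfalso
        rw [SimpleGraph.deleteEdges_adj] at hadj
        have := hadj.1
        rw [hG] at this
        simp at this
    -- claim 2: some inl x₀ with k ≤ x₀.val is in S
    obtain ⟨x₀, hx₀k, hx₀S⟩ : ∃ x₀ : Fin a, k ≤ x₀.val ∧ Sum.inl x₀ ∈ S := by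
      obtain ⟨u, huS, hadj⟩ := hdom (Sum.inr (⟨k, hkb⟩ : Fin b))
      rcases u with x | y
      · rw [(G.deleteEdges F).adj_comm, hG, hF, adj_deleteEdges_inr hka hab] at hadj
        push_neg at hadj
        exact ⟨x, hadj.2 rfl, huS⟩
      · exfalso
        rw [SimpleGraph.deleteEdges_adj] at hadj
        have := hadj.1
        rw [hG] at this
        simp at this
    -- claim 3: some inr y₀ is in S
    obtain ⟨y₀, hy₀S⟩ : ∃ y₀ : Fin b, Sum.inr y₀ ∈ S := by
      obtain ⟨u, huS, hadj⟩ := hdom (Sum.inl (⟨0, h0a⟩ : Fin a))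
      rcases u with x | y
      · exfalso
        rw [SimpleGraph.deleteEdges_adj] at hadj
        have := hadj.1
        rw [hG] at this
        simp at this
      · exact ⟨y, huS⟩
    -- the subset T of S of cardinality k + 2
    set A : Set (Fin a) := {x : Fin a | x.val < k} ∪ {x₀} with hA
    set T : Set (Fin a ⊕ Fin b) := (Sum.inl '' A) ∪ {Sum.inr y₀} with hT
    have hTS : T ⊆ S := by
      rintro v (⟨x, hx, rfl⟩ | hv)
      · rcases hx with hx | hx
        · have h1 := hc1 x.val hx
          have hx' : (⟨x.val, lt_trans hx hka⟩ : Fin a) = x := Fin.ext rfl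
          rwa [hx'] at h1
        · rw [Set.mem_singleton_iff] at hx
          rw [hx]; exact hx₀S
      · rw [Set.mem_singleton_iff] at hv
        rw [hv]; exact hy₀S
    have hAcard : A.ncard = k + 1 := by
      rw [hA, Set.ncard_union_eq ?_ (Set.toFinite _) (Set.toFinite _),
        ncard_lt_k hka, Set.ncard_singleton]
      rw [Set.disjoint_singleton_right]
      simp only [Set.mem_setOf_eq, not_lt]
      exact hx₀k
    have hTcard : T.ncard = k + 2 := by
      rw [hT, Set.ncard_union_eq ?_ (Set.toFinite _) (Set.toFinite _),
        Set.ncard_image_of_injective _ Sum.inl_injective, hAcard, Set.ncard_singleton]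
      rw [Set.disjoint_singleton_right]
      rintro ⟨x, -, hx⟩
      exact Sum.inl_ne_inr hx
    calc 2 + k = k + 2 := by omega
      _ = T.ncard := hTcard.symm
      _ ≤ S.ncard := Set.ncard_le_ncard hTS (Set.toFinite S)
      _ = n := hcard
  -- conclude
  have hmem : F.ncard ∈ {m : ℕ | ∃ F' : Set (Sym2 (Fin a ⊕ Fin b)),
      F' ⊆ G.edgeSet ∧ F'.ncard = m ∧ NoIsolatedVerts (G.deleteEdges F') ∧
      totalDominationNumber G + k ≤ totalDominationNumber (G.deleteEdges F')} :=
    ⟨F, hG ▸ bondF_subset hka hab, rfl, hiso, hlow⟩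
  exact le_trans (Nat.sInf_le hmem) (hF ▸ bondF_ncard hka hab)
end

section
/- Let k be a positive integer and let a and b be integers with ⌈k/2⌉ + 1 ≤ a ≤ b. Then the k-total bondage number of the complete bipartite graph K_{a,b} satisfies b_t^k(K_{a,b}) ≤ ⌈k/2⌉ · (a + b − ⌈k/2⌉ − 1). -/
open SimpleGraph

/- auxiliary lemmas -/
lemma ncard_range_inj {α β : Type*} (f : α → β) (hf : Function.Injective f) :
    (Set.range f).ncard = Nat.card α := by
  rw [← Set.image_univ, Set.ncard_image_of_injective _ hf, Set.ncard_univ]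

lemma ncard_val_lt (n c : ℕ) (h : c ≤ n) : {i : Fin n | i.val < c}.ncard = c := by
  have : {i : Fin n | i.val < c}
      = Set.range (fun t : Fin c => (⟨t.val, lt_of_lt_of_le t.2 h⟩ : Fin n)) := by
    ext i
    constructor
    · intro hi; exact ⟨⟨i.val, hi⟩, rfl⟩
    · rintro ⟨t, rfl⟩; exact t.2
  rw [this, ncard_range_inj]
  · simp
  · intro s t hst; simpa [Fin.ext_iff] using hst

lemma arith_aux (c a b : ℕ) (hca : c < a) (hab : a ≤ b) :
    c * b - c + (a - c) * c = c * (a + b - c - 1) := by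
  obtain ⟨a', rfl⟩ : ∃ a', a = c + 1 + a' := ⟨a - (c + 1), by omega⟩
  obtain ⟨b', rfl⟩ : ∃ b', b = c + 1 + a' + b' := ⟨b - (c + 1 + a'), by omega⟩
  have h1 : c * (c + 1 + a' + b') = c * (c + a' + b') + c := by ring
  have h2 : c + 1 + a' + (c + 1 + a' + b') - c - 1 = c + 1 + 2 * a' + b' := by omega
  have h3 : c + 1 + a' - c = 1 + a' := by omega
  rw [h1, h2, h3]
  have h4 : c * (c + 1 + 2 * a' + b') = c * (c + a' + b') + (1 + a') * c := by ring
  omega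


/-- For `⌈k/2⌉ + 1 ≤ a ≤ b`, the `k`-total bondage number of the complete
bipartite graph `K_{a,b}` is at most `⌈k/2⌉ · (a + b − ⌈k/2⌉ − 1)`. -/
theorem kTotalBondage_completeBipartiteGraph_le' (k a b : ℕ) (hk : 1 ≤ k)
    (hka : (k + 1) / 2 + 1 ≤ a) (hab : a ≤ b) :
    kTotalBondage (completeBipartiteGraph (Fin a) (Fin b)) k ≤
      ((k + 1) / 2) * (a + b - (k + 1) / 2 - 1) := by
  set c := (k + 1) / 2 with hcdef
  have hc1 : 1 ≤ c := by omega
  have hck : k ≤ 2 * c := by omega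
  have hca : c < a := hka
  have hcb : c < b := lt_of_lt_of_le hca hab
  have ha0 : 0 < a := by omega
  have hb0 : 0 < b := by omega
  set G := completeBipartiteGraph (Fin a) (Fin b) with hG
  set P : Fin a × Fin b → Prop := fun p =>
    (p.1.val < c ∨ p.2.val < c) ∧ ¬(p.1.val < c ∧ p.2.val = p.1.val) with hP
  set Q : Set (Fin a × Fin b) := {p | P p} with hQ
  set φ : Fin a × Fin b → Sym2 (Fin a ⊕ Fin b) := fun p => s(Sum.inl p.1, Sum.inr p.2) with hφ
  have hφinj : Function.Injective φ := by
    rintro ⟨i, j⟩ ⟨i', j'⟩ h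
    simp only [hφ, Sym2.eq_iff] at h
    rcases h with ⟨h1, h2⟩ | ⟨h1, h2⟩
    · simp_all
    · simp_all
  set F : Set (Sym2 (Fin a ⊕ Fin b)) := φ '' Q with hF
  have hmemF : ∀ (i : Fin a) (j : Fin b), s(Sum.inl i, Sum.inr j) ∈ F ↔ P (i, j) := by
    intro i j
    constructor
    · rintro ⟨⟨i', j'⟩, hp, he⟩
      have h2 : ((i', j') : Fin a × Fin b) = (i, j) := hφinj he
      rw [← h2]; exact hp
    · intro h; exact ⟨(i, j), h, rfl⟩
  have hFedge : F ⊆ G.edgeSet := by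
    rintro e ⟨⟨i, j⟩, hp, rfl⟩
    simp [hφ, hG]
  have hadj : ∀ (i : Fin a) (j : Fin b),
      (G.deleteEdges F).Adj (Sum.inl i) (Sum.inr j) ↔
        ((c ≤ i.val ∧ c ≤ j.val) ∨ (i.val < c ∧ j.val = i.val)) := by
    intro i j
    rw [SimpleGraph.deleteEdges_adj, hmemF]
    simp only [hG, completeBipartiteGraph_adj, Sum.isLeft_inl, Sum.isRight_inr,
      Sum.isRight_inl, Sum.isLeft_inr, hP]
    constructor
    · rintro ⟨-, h⟩; omega
    · intro h
      refine ⟨by simp, ?_⟩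
      omega
  have hadjLL : ∀ x y : Fin a, ¬(G.deleteEdges F).Adj (Sum.inl x) (Sum.inl y) := by
    intro x y h
    rw [SimpleGraph.deleteEdges_adj] at h
    simp [hG] at h
  have hadjRR : ∀ x y : Fin b, ¬(G.deleteEdges F).Adj (Sum.inr x) (Sum.inr y) := by
    intro x y h
    rw [SimpleGraph.deleteEdges_adj] at h
    simp [hG] at h
  have hniso : NoIsolatedVerts (G.deleteEdges F) := by
    intro v
    rcases v with i | j
    · by_cases h : i.val < c
      · exact ⟨Sum.inr ⟨i.val, lt_of_lt_of_le h hcb.le⟩, (hadj _ _).2 (Or.inr ⟨h, rfl⟩)⟩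
      · exact ⟨Sum.inr ⟨c, hcb⟩, (hadj _ _).2 (Or.inl ⟨by omega, le_refl c⟩)⟩
    · by_cases h : j.val < c
      · exact ⟨Sum.inl ⟨j.val, lt_of_lt_of_le h hca.le⟩,
          ((G.deleteEdges F).adj_comm _ _).1 ((hadj _ _).2 (Or.inr ⟨h, rfl⟩))⟩
      · exact ⟨Sum.inl ⟨c, hca⟩,
          ((G.deleteEdges F).adj_comm _ _).1 ((hadj _ _).2 (Or.inl ⟨le_refl c, by omega⟩))⟩
  have hg2 : totalDominationNumber G ≤ 2 := by
    apply Nat.sInf_le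
    refine ⟨{Sum.inl ⟨0, ha0⟩, Sum.inr ⟨0, hb0⟩}, Set.ncard_pair (by simp), ?_⟩
    intro v
    rcases v with i | j
    · exact ⟨Sum.inr ⟨0, hb0⟩, by simp, by simp [hG]⟩
    · exact ⟨Sum.inl ⟨0, ha0⟩, by simp, by simp [hG]⟩
  have hgset : totalDominationNumber G + k ≤ totalDominationNumber (G.deleteEdges F) := by
    have hne : {n : ℕ | ∃ S : Set (Fin a ⊕ Fin b), S.ncard = n ∧
        IsTotalDominatingSet (G.deleteEdges F) S}.Nonempty := by
      refine ⟨(Set.univ : Set (Fin a ⊕ Fin b)).ncard, Set.univ, rfl, fun v => ?_⟩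
      obtain ⟨u, hu⟩ := hniso v
      exact ⟨u, Set.mem_univ u, hu⟩
    obtain ⟨S, hScard, hS⟩ : ∃ S : Set (Fin a ⊕ Fin b),
        S.ncard = totalDominationNumber (G.deleteEdges F) ∧
        IsTotalDominatingSet (G.deleteEdges F) S := Nat.sInf_mem hne
    -- forced memberships
    have hinl : ∀ i : Fin a, i.val < c → Sum.inl i ∈ S := by
      intro i hi
      obtain ⟨u, hu, hadj'⟩ := hS (Sum.inr ⟨i.val, lt_of_lt_of_le hi hcb.le⟩)
      rcases u with i' | j'
      · have h' := ((G.deleteEdges F).adj_comm _ _).1 hadj'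
        rcases (hadj i' _).1 h' with ⟨h1, h2⟩ | ⟨h1, h2⟩
        · simp at h2; omega
        · have : i' = i := Fin.ext (by simpa using h2.symm)
          rw [← this]; exact hu
      · exact absurd hadj' (hadjRR _ _)
    have hinr : ∀ j : Fin b, j.val < c → Sum.inr j ∈ S := by
      intro j hj
      obtain ⟨u, hu, hadj'⟩ := hS (Sum.inl ⟨j.val, lt_of_lt_of_le hj hca.le⟩)
      rcases u with i' | j'
      · exact absurd hadj' (hadjLL _ _)
      · rcases (hadj _ j').1 hadj' with ⟨h1, h2⟩ | ⟨h1, h2⟩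
        · simp at h1; omega
        · have : j' = j := Fin.ext (by simpa using h2)
          rw [← this]; exact hu
    have hi0 : ∃ i0 : Fin a, c ≤ i0.val ∧ Sum.inl i0 ∈ S := by
      obtain ⟨u, hu, hadj'⟩ := hS (Sum.inr ⟨c, hcb⟩)
      rcases u with i' | j'
      · have h' := ((G.deleteEdges F).adj_comm _ _).1 hadj'
        rcases (hadj i' _).1 h' with ⟨h1, h2⟩ | ⟨h1, h2⟩
        · exact ⟨i', h1, hu⟩
        · simp at h2; omega
      · exact absurd hadj' (hadjRR _ _)
    have hj0 : ∃ j0 : Fin b, c ≤ j0.val ∧ Sum.inr j0 ∈ S := by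
      obtain ⟨u, hu, hadj'⟩ := hS (Sum.inl ⟨c, hca⟩)
      rcases u with i' | j'
      · exact absurd hadj' (hadjLL _ _)
      · rcases (hadj _ j').1 hadj' with ⟨h1, h2⟩ | ⟨h1, h2⟩
        · exact ⟨j', h2, hu⟩
        · simp at h1
    obtain ⟨i0, hi0c, hi0S⟩ := hi0
    obtain ⟨j0, hj0c, hj0S⟩ := hj0
    set A : Set (Fin a) := insert i0 {i : Fin a | i.val < c} with hAdef
    set B : Set (Fin b) := insert j0 {j : Fin b | j.val < c} with hBdef
    set T : Set (Fin a ⊕ Fin b) := (Sum.inl '' A) ∪ (Sum.inr '' B) with hTdef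
    have hTS : T ⊆ S := by
      rintro v (⟨i, hi, rfl⟩ | ⟨j, hj, rfl⟩)
      · rcases hi with rfl | hi
        · exact hi0S
        · exact hinl i hi
      · rcases hj with rfl | hj
        · exact hj0S
        · exact hinr j hj
    have hAcard : A.ncard = c + 1 := by
      rw [hAdef, Set.ncard_insert_of_notMem (by simp only [Set.mem_setOf_eq]; omega),
        ncard_val_lt a c hca.le]
    have hBcard : B.ncard = c + 1 := by
      rw [hBdef, Set.ncard_insert_of_notMem (by simp only [Set.mem_setOf_eq]; omega),
        ncard_val_lt b c hcb.le]
    have hTcard : T.ncard = 2 * c + 2 := by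
      rw [hTdef, Set.ncard_union_eq (by
          rw [Set.disjoint_left]
          rintro v ⟨i, -, rfl⟩ ⟨j, -, hj⟩
          exact Sum.inl_ne_inr hj.symm),
        Set.ncard_image_of_injective _ Sum.inl_injective,
        Set.ncard_image_of_injective _ Sum.inr_injective, hAcard, hBcard]
      ring
    have key : 2 * c + 2 ≤ S.ncard := hTcard ▸ Set.ncard_le_ncard hTS (Set.toFinite S)
    omega
  -- cardinality of F
  have hS1 : ({p : Fin a × Fin b | p.1.val < c}).ncard = c * b := by
    have : {p : Fin a × Fin b | p.1.val < c} =
        Set.range (fun q : Fin c × Fin b => ((⟨q.1.val, lt_of_lt_of_le q.1.2 hca.le⟩ : Fin a), q.2)) := by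
      ext ⟨i, j⟩
      simp only [Set.mem_setOf_eq, Set.mem_range, Prod.mk.injEq, Fin.ext_iff]
      constructor
      · intro hi; exact ⟨(⟨i.val, hi⟩, j), rfl, rfl⟩
      · rintro ⟨⟨s, t⟩, h1, h2⟩; have := s.2; omega
    rw [this, ncard_range_inj]
    · simp
    · rintro ⟨s, t⟩ ⟨s', t'⟩ h
      simp only [Prod.mk.injEq, Fin.mk.injEq] at h
      simp [Prod.ext_iff, Fin.ext_iff, h.1, h.2]
  have hD : ({p : Fin a × Fin b | p.1.val < c ∧ p.2.val = p.1.val}).ncard = c := by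
    have : {p : Fin a × Fin b | p.1.val < c ∧ p.2.val = p.1.val} =
        Set.range (fun t : Fin c =>
          ((⟨t.val, lt_of_lt_of_le t.2 hca.le⟩ : Fin a), (⟨t.val, lt_of_lt_of_le t.2 hcb.le⟩ : Fin b))) := by
      ext ⟨i, j⟩
      simp only [Set.mem_setOf_eq, Set.mem_range, Prod.mk.injEq, Fin.ext_iff]
      constructor
      · rintro ⟨h1, h2⟩
        exact ⟨⟨i.val, h1⟩, rfl, h2.symm⟩
      · rintro ⟨t, h1, h2⟩; have := t.2; omega
    rw [this, ncard_range_inj]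
    · simp
    · intro s t h
      simp only [Prod.mk.injEq, Fin.mk.injEq] at h
      exact Fin.ext h.1
  have hQ2 : ({p : Fin a × Fin b | c ≤ p.1.val ∧ p.2.val < c}).ncard = (a - c) * c := by
    have : {p : Fin a × Fin b | c ≤ p.1.val ∧ p.2.val < c} =
        Set.range (fun q : Fin (a - c) × Fin c =>
          ((⟨c + q.1.val, by omega⟩ : Fin a), (⟨q.2.val, lt_of_lt_of_le q.2.2 hcb.le⟩ : Fin b))) := by
      ext ⟨i, j⟩
      simp only [Set.mem_setOf_eq, Set.mem_range, Prod.mk.injEq, Fin.ext_iff]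
      constructor
      · rintro ⟨h1, h2⟩
        exact ⟨(⟨i.val - c, by omega⟩, ⟨j.val, h2⟩), by simp; omega, rfl⟩
      · rintro ⟨⟨s, t⟩, h1, h2⟩; have := t.2; omega
    rw [this, ncard_range_inj]
    · simp
    · rintro ⟨s, t⟩ ⟨s', t'⟩ h
      simp only [Prod.mk.injEq, Fin.mk.injEq] at h
      simp [Prod.ext_iff, Fin.ext_iff]
      omega
  have hQcard : Q.ncard = c * b - c + (a - c) * c := by
    have hQeq : Q = ({p : Fin a × Fin b | p.1.val < c} \
        {p : Fin a × Fin b | p.1.val < c ∧ p.2.val = p.1.val}) ∪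
        {p : Fin a × Fin b | c ≤ p.1.val ∧ p.2.val < c} := by
      ext ⟨i, j⟩
      simp only [hQ, hP, Set.mem_setOf_eq, Set.mem_union, Set.mem_diff]
      omega
    rw [hQeq, Set.ncard_union_eq (by
        rw [Set.disjoint_left]
        rintro ⟨i, j⟩ ⟨h1, -⟩ h2
        simp only [Set.mem_setOf_eq] at h1 h2
        omega),
      Set.ncard_diff (fun p hp => hp.1), hS1, hD, hQ2]
  have hFcard : F.ncard = c * b - c + (a - c) * c := by
    rw [hF, Set.ncard_image_of_injective _ hφinj, hQcard]
  have hle : kTotalBondage G k ≤ F.ncard :=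
    Nat.sInf_le ⟨F, hFedge, rfl, hniso, hgset⟩
  calc kTotalBondage G k ≤ F.ncard := hle
    _ = c * (a + b - c - 1) := by rw [hFcard]; exact arith_aux c a b hca hab
end
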